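/- arXiv:1309.1994 — 6 statements merged into one kernel-verified Lean document; each statement's English description precedes it below -/
import Mathlib

section
/- Let G be the Minkowski sum c_1 Δ_{I_1} + ... + c_m Δ_{I_m} in ℝ^n, where each c_i is a positive integer, each I_i ⊆ [n] is nonempty, and Δ_I denotes the convex hull of {e_i : i ∈ I}. Then G = {(t_1,...,t_n) ∈ ℝ^n : Σ_i t_i = z_{[n]} and Σ_{i ∈ A} t_i ≤ z_A for all A ⊆ [n]}, where z_A := Σ_{j : I_j ∩ A ≠ ∅} c_j. -/
open Pointwise

/-- The face `Δ_I` of the standard simplex: the convex hull of the standard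
basis vectors `e i` for `i ∈ I`. -/
def simplexFace {n : ℕ} (I : Finset (Fin n)) : Set (Fin n → ℝ) :=
  convexHull ℝ {x : Fin n → ℝ | ∃ i ∈ I, x = Pi.single i 1}

/-!
Write `B(z) = {t | t(univ) = z(univ), t(A) ≤ z(A) for all A}`. The function `z` of the statement
is a nonnegative combination of the submodular functions `A ↦ [A meets I j]`, so, adding one summand
`r • Δ_J` at a time, it suffices to show `r • Δ_J + B(z) = B(r [· meets J] + z)` for submodular `z`
with `z ∅ = 0`. The inclusion `⊆` is immediate. Conversely, for `t` on the right the function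
`f A = t(A) - z(A)` is supermodular and at most `r [A meets J]`; its envelope
`g B = max {f A | A ∩ J ⊆ B}` is still supermodular, vanishes at `∅` and equals `r` at `J`. The greedy
vector of `g` along `J` (a point of the core of the convex game `g`, as in Shapley's theorem) is then
a point `y` of `r • Δ_J` with `f ≤ y(·)`, that is, `t - y ∈ B(z)`.
-/

open Finset

section SetFunctions

variable {ι : Type*} [DecidableEq ι]

def IsSubmodular (z : Finset ι → ℝ) : Prop :=
  ∀ A B, z (A ∪ B) + z (A ∩ B) ≤ z A + z B

def IsSupermodular (f : Finset ι → ℝ) : Prop :=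
  ∀ A B, f A + f B ≤ f (A ∪ B) + f (A ∩ B)

def hitWeight (J : Finset ι) (r : ℝ) (A : Finset ι) : ℝ :=
  if (J ∩ A).Nonempty then r else 0

lemma isSubmodular_hitWeight (J : Finset ι) {r : ℝ} (hr : 0 ≤ r) :
    IsSubmodular (hitWeight J r) := by
  intro A B
  have hinter : (J ∩ (A ∩ B)).Nonempty → (J ∩ A).Nonempty ∧ (J ∩ B).Nonempty := fun h =>
    ⟨h.mono (inter_subset_inter_left inter_subset_left),
      h.mono (inter_subset_inter_left inter_subset_right)⟩
  simp only [hitWeight, inter_union_distrib_left, union_nonempty]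
  split_ifs <;> grind

lemma IsSubmodular.sum {κ : Type*} (s : Finset κ) {z : κ → Finset ι → ℝ}
    (hz : ∀ j ∈ s, IsSubmodular (z j)) : IsSubmodular (∑ j ∈ s, z j) := by
  intro A B
  simp only [Finset.sum_apply, ← sum_add_distrib]
  exact sum_le_sum fun j hj => hz j hj A B

lemma IsSubmodular.isSupermodular_sum_sub {z : Finset ι → ℝ} (hz : IsSubmodular z) (t : ι → ℝ) :
    IsSupermodular fun A => ∑ i ∈ A, t i - z A := by
  intro A B
  have := hz A B
  linarith [sum_union_inter (s₁ := A) (s₂ := B) (f := t)]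

lemma IsSupermodular.exists_sum_eq_forall_le_sum {f : Finset ι → ℝ} (hf : IsSupermodular f)
    (hf0 : f ∅ = 0) (s : Finset ι) :
    ∃ x : ι → ℝ, ∑ i ∈ s, x i = f s ∧ ∀ B ⊆ s, f B ≤ ∑ i ∈ B, x i := by
  induction s using Finset.induction_on with
  | empty => exact ⟨0, by simp [hf0], fun B hB => by simp [subset_empty.mp hB, hf0]⟩
  | @insert a s ha ih =>
    obtain ⟨x, hxs, hxB⟩ := ih
    refine ⟨Function.update x a (f (insert a s) - f s), ?_, fun B hB => ?_⟩
    · rw [sum_insert ha, Function.update_self, sum_update_of_notMem ha, hxs]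
      ring
    by_cases haB : a ∈ B
    · have hunion : B ∪ s = insert a s := by grind
      have hinter : B ∩ s = B \ {a} := by grind
      have hsuper := hf B s
      rw [hunion, hinter] at hsuper
      rw [sum_update_of_mem haB]
      linarith [hxB (B \ {a}) (by grind)]
    · rw [sum_update_of_notMem haB]
      exact hxB B (by grind)

end SetFunctions

section BasePolytope

variable {ι : Type*} [Fintype ι]

def basePolytope (z : Finset ι → ℝ) : Set (ι → ℝ) :=
  {t | ∑ i, t i = z univ ∧ ∀ A, ∑ i ∈ A, t i ≤ z A}

lemma basePolytope_add_subset (z w : Finset ι → ℝ) :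
    basePolytope z + basePolytope w ⊆ basePolytope (z + w) := by
  rintro _ ⟨x, ⟨hx, hxA⟩, y, ⟨hy, hyA⟩, rfl⟩
  refine ⟨by simp [sum_add_distrib, hx, hy], fun A => ?_⟩
  simpa [sum_add_distrib] using add_le_add (hxA A) (hyA A)

lemma basePolytope_zero [DecidableEq ι] : basePolytope (0 : Finset ι → ℝ) = 0 := by
  ext t
  refine ⟨fun ⟨ht, htA⟩ => funext fun i => ?_, fun ht => ?_⟩
  · have hle : t i ≤ 0 := by simpa using htA {i}
    have hrest := htA (univ.erase i)
    rw [← add_sum_erase _ t (mem_univ i)] at ht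
    simp only [Pi.zero_apply] at *
    linarith
  · simp [Set.mem_zero.mp ht, basePolytope]

end BasePolytope

section TraceSup

variable {ι : Type*} [DecidableEq ι] [Fintype ι]

def traceSup (f : Finset ι → ℝ) (J B : Finset ι) : ℝ :=
  ({A | A ∩ J ⊆ B} : Finset (Finset ι)).sup' ⟨∅, by simp⟩ f

variable {f : Finset ι → ℝ} {J B : Finset ι}

lemma le_traceSup {A : Finset ι} (hA : A ∩ J ⊆ B) : f A ≤ traceSup f J B :=
  le_sup' f (by simpa using hA)

lemma traceSup_le {r : ℝ} (h : ∀ A, A ∩ J ⊆ B → f A ≤ r) : traceSup f J B ≤ r :=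
  sup'_le _ _ fun A hA => h A (by simpa using hA)

lemma exists_eq_traceSup (f : Finset ι → ℝ) (J B : Finset ι) :
    ∃ A, A ∩ J ⊆ B ∧ traceSup f J B = f A := by
  obtain ⟨A, hA, hfA⟩ := exists_mem_eq_sup' (s := ({A | A ∩ J ⊆ B} : Finset (Finset ι)))
    ⟨∅, by simp⟩ f
  exact ⟨A, by simpa using hA, hfA⟩

lemma IsSupermodular.traceSup (hf : IsSupermodular f) (J : Finset ι) :
    IsSupermodular (_root_.traceSup f J) := by
  intro B C
  obtain ⟨A, hAB, hA⟩ := exists_eq_traceSup f J B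
  obtain ⟨A', hA'C, hA'⟩ := exists_eq_traceSup f J C
  have hunion : f (A ∪ A') ≤ _root_.traceSup f J (B ∪ C) :=
    le_traceSup (by rw [union_inter_distrib_right]; exact union_subset_union hAB hA'C)
  have hinter : f (A ∩ A') ≤ _root_.traceSup f J (B ∩ C) :=
    le_traceSup fun i hi => by grind
  linarith [hf A A']

end TraceSup

section SimplexFace

variable {n : ℕ} {J : Finset (Fin n)}

lemma simplexFace_eq (J : Finset (Fin n)) :
    simplexFace J = {x | (∀ i, 0 ≤ x i) ∧ (∀ i ∉ J, x i = 0) ∧ ∑ i, x i = 1} := by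
  apply subset_antisymm
  · refine convexHull_min ?_ ?_
    · rintro _ ⟨i, hi, rfl⟩
      refine ⟨fun k => ?_, fun k hk => ?_, by simp⟩
      · by_cases hki : k = i <;> simp [hki]
      · simp [show k ≠ i by rintro rfl; exact hk hi]
    · rintro x ⟨hx0, hxJ, hx1⟩ y ⟨hy0, hyJ, hy1⟩ a b ha hb hab
      refine ⟨fun i => ?_, fun i hi => by simp [hxJ i hi, hyJ i hi], ?_⟩
      · simp only [Pi.add_apply, Pi.smul_apply, smul_eq_mul]
        exact add_nonneg (mul_nonneg ha (hx0 i)) (mul_nonneg hb (hy0 i))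
      · simp [sum_add_distrib, ← mul_sum, hx1, hy1, hab]
  · rintro x ⟨hx0, hxJ, hx1⟩
    have hsumJ : ∑ i ∈ J, x i = 1 := by
      rw [← hx1]; exact sum_subset (subset_univ J) fun i _ hi => hxJ i hi
    have hx : x = ∑ i ∈ J, x i • (Pi.single i 1 : Fin n → ℝ) := by
      conv_lhs => rw [← univ_sum_single x]
      rw [← sum_subset (subset_univ J) fun i _ hi => by simp [hxJ i hi]]
      exact sum_congr rfl fun i _ => by rw [← Pi.single_smul', smul_eq_mul, mul_one]
    rw [hx]
    exact (convex_convexHull ℝ _).sum_mem (fun i _ => hx0 i) hsumJ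
      fun i hi => subset_convexHull ℝ _ ⟨i, hi, rfl⟩

lemma smul_simplexFace (hJ : J.Nonempty) {r : ℝ} (hr : 0 ≤ r) :
    r • simplexFace J = {x | (∀ i, 0 ≤ x i) ∧ (∀ i ∉ J, x i = 0) ∧ ∑ i, x i = r} := by
  rcases hr.eq_or_lt with rfl | hr
  · obtain ⟨i, hi⟩ := hJ
    have hne : (simplexFace J).Nonempty := ⟨Pi.single i 1, subset_convexHull ℝ _ ⟨i, hi, rfl⟩⟩
    rw [Set.zero_smul_set hne]
    ext x
    refine ⟨fun hx => by simp [Set.mem_zero.mp hx], fun ⟨hx0, _, hx⟩ => ?_⟩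
    have := (sum_eq_zero_iff_of_nonneg fun i _ => hx0 i).mp hx
    exact Set.mem_zero.mpr (funext fun i => this i (mem_univ i))
  · ext x
    rw [Set.mem_smul_set_iff_inv_smul_mem₀ hr.ne', simplexFace_eq]
    simp only [Set.mem_ofPred_eq, Pi.smul_apply, smul_eq_mul, ← mul_sum,
      mul_nonneg_iff_of_pos_left (inv_pos.mpr hr), mul_eq_zero, inv_eq_zero, hr.ne', false_or]
    rw [inv_mul_eq_one₀ hr.ne', eq_comm]

end SimplexFace

section MinkowskiSum

variable {n : ℕ} {J : Finset (Fin n)} {r : ℝ}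

lemma smul_simplexFace_subset_basePolytope (hJ : J.Nonempty) (hr : 0 ≤ r) :
    r • simplexFace J ⊆ basePolytope (hitWeight J r) := by
  rw [smul_simplexFace hJ hr]
  rintro x ⟨hx0, hxJ, hx⟩
  refine ⟨by simp [hitWeight, hJ, hx], fun A => ?_⟩
  unfold hitWeight
  split_ifs with hJA
  · exact hx ▸ sum_le_sum_of_subset_of_nonneg (subset_univ A) fun i _ _ => hx0 i
  · exact (sum_eq_zero fun i hi => hxJ i fun hiJ => hJA ⟨i, mem_inter.mpr ⟨hiJ, hi⟩⟩).le

lemma exists_mem_smul_simplexFace_forall_le_sum (hJ : J.Nonempty) (hr : 0 ≤ r)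
    {f : Finset (Fin n) → ℝ} (hf : IsSupermodular f) (hf0 : f ∅ = 0)
    (hfJ : ∀ A, f A ≤ hitWeight J r A) (hf_univ : f univ = r) :
    ∃ y ∈ r • simplexFace J, ∀ A, f A ≤ ∑ i ∈ A, y i := by
  have hg_nonneg : ∀ B, 0 ≤ traceSup f J B := fun B => hf0 ▸ le_traceSup (by simp)
  have hg0 : traceSup f J ∅ = 0 := by
    refine le_antisymm (traceSup_le fun A hA => ?_) (hg_nonneg ∅)
    have hJA : ¬ (J ∩ A).Nonempty := by
      rw [inter_comm, not_nonempty_iff_eq_empty]; exact subset_empty.mp hA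
    simpa [hitWeight, hJA] using hfJ A
  have hgJ : traceSup f J J = r := by
    refine le_antisymm (traceSup_le fun A _ => (hfJ A).trans ?_) (hf_univ ▸ le_traceSup (by simp))
    unfold hitWeight; split_ifs <;> linarith
  obtain ⟨x, hxJ, hx⟩ := (hf.traceSup J).exists_sum_eq_forall_le_sum hg0 J
  have hsum : ∀ A, ∑ i ∈ A, (if i ∈ J then x i else 0) = ∑ i ∈ A ∩ J, x i :=
    fun A => sum_ite_mem A J x
  refine ⟨fun i => if i ∈ J then x i else 0, ?_, fun A => ?_⟩
  · rw [smul_simplexFace hJ hr]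
    refine ⟨fun i => ?_, fun i hi => if_neg hi, by rw [hsum, univ_inter, hxJ, hgJ]⟩
    dsimp only
    split_ifs with hi
    · simpa using (hg_nonneg {i}).trans (hx {i} (singleton_subset_iff.mpr hi))
    · rfl
  · calc f A ≤ traceSup f J (A ∩ J) := le_traceSup subset_rfl
      _ ≤ ∑ i ∈ A ∩ J, x i := hx _ inter_subset_right
      _ = _ := (hsum A).symm

lemma smul_simplexFace_add_basePolytope (hJ : J.Nonempty) (hr : 0 ≤ r)
    {z : Finset (Fin n) → ℝ} (hz : IsSubmodular z) (hz0 : z ∅ = 0) :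
    r • simplexFace J + basePolytope z = basePolytope (hitWeight J r + z) := by
  refine subset_antisymm
    ((Set.add_subset_add_right (smul_simplexFace_subset_basePolytope hJ hr)).trans
      (basePolytope_add_subset _ _)) fun t ⟨ht, htA⟩ => ?_
  obtain ⟨y, hy, hyA⟩ := exists_mem_smul_simplexFace_forall_le_sum hJ hr
    (hz.isSupermodular_sum_sub t) (by simp [hz0])
    (fun A => by simpa using htA A) (by simp [ht, hitWeight, hJ])
  have hy_sum : ∑ i, y i = r := by
    rw [smul_simplexFace hJ hr] at hy; exact hy.2.2
  refine ⟨y, hy, t - y, ⟨?_, fun A => ?_⟩, add_sub_cancel y t⟩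
  · simp [sum_sub_distrib, ht, hy_sum, hitWeight, hJ]
  · simp only [Pi.sub_apply, sum_sub_distrib]
    linarith [hyA A]

lemma sum_smul_simplexFace_eq_basePolytope {κ : Type*} (I : κ → Finset (Fin n)) (c : κ → ℝ)
    (hI : ∀ j, (I j).Nonempty) (hc : ∀ j, 0 ≤ c j) (s : Finset κ) :
    ∑ j ∈ s, c j • simplexFace (I j) = basePolytope (∑ j ∈ s, hitWeight (I j) (c j)) := by
  classical
  induction s using Finset.induction_on with
  | empty => simp [basePolytope_zero]
  | @insert a s ha ih =>
    rw [sum_insert ha, sum_insert ha, ih]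
    exact smul_simplexFace_add_basePolytope (hI a) (hc a)
      (IsSubmodular.sum s fun j _ => isSubmodular_hitWeight (I j) (hc j))
      (by simp [hitWeight])

end MinkowskiSum

theorem generalizedPermutohedron_eq_inequalities_general
    (n m : ℕ) (I : Fin m → Finset (Fin n)) (c : Fin m → ℕ)
    (hI : ∀ j, (I j).Nonempty) :
    (∑ j : Fin m, (c j : ℝ) • simplexFace (I j)) =
      {t : Fin n → ℝ |
        (∑ i : Fin n, t i) =
          (∑ j ∈ Finset.univ.filter (fun j => (I j ∩ Finset.univ).Nonempty), (c j : ℝ)) ∧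
        ∀ A : Finset (Fin n),
          (∑ i ∈ A, t i) ≤
            ∑ j ∈ Finset.univ.filter (fun j => (I j ∩ A).Nonempty), (c j : ℝ)} := by
  rw [sum_smul_simplexFace_eq_basePolytope I _ hI (fun j => Nat.cast_nonneg (c j))]
  simp only [basePolytope, Finset.sum_apply, hitWeight, Finset.sum_filter]

/-- the Minkowski sum `G = c 1 • Δ_{I 1} + ... + c m • Δ_{I m}`
(with `c j` positive integers and `I j` nonempty) equals
`{t | ∑ i, t i = z [n] ∧ ∀ A, ∑ i in A, t i ≤ z A}` where
`z A = ∑_{j : I j ∩ A ≠ ∅} c j`. -/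
theorem generalizedPermutohedron_eq_inequalities
    (n m : ℕ) (I : Fin m → Finset (Fin n)) (c : Fin m → ℕ)
    (hI : ∀ j, (I j).Nonempty) (hc : ∀ j, 0 < c j) :
    (∑ j : Fin m, (c j : ℝ) • simplexFace (I j)) =
      {t : Fin n → ℝ |
        (∑ i : Fin n, t i) =
          (∑ j ∈ Finset.univ.filter (fun j => (I j ∩ Finset.univ).Nonempty), (c j : ℝ)) ∧
        ∀ A : Finset (Fin n),
          (∑ i ∈ A, t i) ≤
            ∑ j ∈ Finset.univ.filter (fun j => (I j ∩ A).Nonempty), (c j : ℝ)} :=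
  generalizedPermutohedron_eq_inequalities_general n m I c hI
end

section
/- Let P be a finite poset with minimum q_0 and maximum q_{r+1}, Q = {q_0 < q_1 < ... < q_{r+1}} a chain in P, and B_{i,j} the induced partition blocks. Then for every linear extension σ of P, the vector p = (p_1, ..., p_{r+1}) with p_k = |{x ∈ P : σ(q_{k-1}) < σ(x) ≤ σ(q_k)}| for k = 1, ..., r+1 satisfies Σ_k p_k = |P| - 1 and, for every subset A ⊆ [r+1], Σ_{k ∈ A} p_k ≤ Σ_{(i,j) : [i,j] ∩ A ≠ ∅} |B_{i,j}|. -/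
open Classical in
/-- The blocks `B i j` determined by a chain `q 0 < q 1 < ... < q (r+1)` in `P`. -/
noncomputable def posetBlock {P : Type*} [PartialOrder P] (q : ℕ → P) (i j : ℕ) : Set P :=
  if i = j then
    (if i = 1 then {p : P | q 0 ≤ p ∧ p ≤ q 1}
     else {p : P | q (i - 1) < p ∧ p ≤ q i})
  else
    {p : P | q (i - 1) < p ∧ p < q j ∧ ¬ (q i < p) ∧ ¬ (p < q (j - 1))}

/-- for a finite poset `P` with minimum `q 0` and maximum
`q (r+1)`, a chain `q 0 < ... < q (r+1)`, and a linear extension `σ`, the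
vector `p k = |{x : σ (q (k-1)) < σ x ≤ σ (q k)}|` (for `k = 1, ..., r+1`)
satisfies `∑ k, p k = |P| - 1` and, for every `A ⊆ [r+1]`,
`∑_{k ∈ A} p k ≤ ∑_{(i,j) : [i,j] ∩ A ≠ ∅} |B i j|`. -/
theorem subposet_vector_in_permutohedron_inequalities
    {P : Type*} [PartialOrder P] [Fintype P]
    (r : ℕ) (q : ℕ → P)
    (hq : ∀ i j, i < j → j ≤ r + 1 → q i < q j)
    (hmin : ∀ p : P, q 0 ≤ p)
    (hmax : ∀ p : P, p ≤ q (r + 1))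
    (σ : P ≃ Fin (Fintype.card P))
    (hσ : ∀ x y : P, x < y → σ x < σ y)
    (p : ℕ → ℕ)
    (hp : ∀ k, 1 ≤ k → k ≤ r + 1 →
      p k = Set.ncard {x : P | σ (q (k - 1)) < σ x ∧ σ x ≤ σ (q k)}) :
    (∑ k ∈ Finset.Icc 1 (r + 1), p k) = Fintype.card P - 1 ∧
    ∀ A : Finset ℕ, A ⊆ Finset.Icc 1 (r + 1) →
      (∑ k ∈ A, p k) ≤
        ∑ ij ∈ (Finset.Icc 1 (r + 1) ×ˢ Finset.Icc 1 (r + 1)).filter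
            (fun ij => ij.1 ≤ ij.2 ∧ (Finset.Icc ij.1 ij.2 ∩ A).Nonempty),
          Set.ncard (posetBlock q ij.1 ij.2) := by
  classical
  have hle : ∀ x y : P, x ≤ y → σ x ≤ σ y := by
    intro x y h
    rcases h.lt_or_eq with h | h
    · exact (hσ x y h).le
    · rw [h]
  have hqle : ∀ a b : ℕ, a ≤ b → b ≤ r + 1 → q a ≤ q b := by
    intro a b hab hb
    rcases hab.lt_or_eq with h | h
    · exact (hq a b h hb).le
    · rw [h]
  set Sfin : ℕ → Finset P :=
    fun k => Finset.univ.filter (fun x => σ (q (k - 1)) < σ x ∧ σ x ≤ σ (q k)) with hSfin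
  have hpS : ∀ k ∈ Finset.Icc 1 (r + 1), p k = (Sfin k).card := by
    intro k hk
    rw [Finset.mem_Icc] at hk
    rw [hp k hk.1 hk.2, Set.ncard_eq_toFinset_card']
    congr 1
    ext x
    simp [hSfin]
  have hdisj : ∀ k ∈ Finset.Icc 1 (r + 1), ∀ k' ∈ Finset.Icc 1 (r + 1),
      k ≠ k' → Disjoint (Sfin k) (Sfin k') := by
    have key : ∀ k k', 1 ≤ k → k' ≤ r + 1 → k < k' → Disjoint (Sfin k) (Sfin k') := by
      intro k k' hk1 hk' hkk'
      rw [Finset.disjoint_left]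
      intro x hx hx'
      simp only [hSfin, Finset.mem_filter] at hx hx'
      have h1 : σ (q k) ≤ σ (q (k' - 1)) := hle _ _ (hqle k (k' - 1) (by omega) (by omega))
      exact absurd (hx.2.2.trans_lt (h1.trans_lt hx'.2.1)) (lt_irrefl _)
    intro k hk k' hk' hne
    rw [Finset.mem_Icc] at hk hk'
    rcases hne.lt_or_gt with h | h
    · exact key k k' hk.1 hk'.2 h
    · exact (key k' k hk'.1 hk.2 h).symm
  have hsum : ∀ A : Finset ℕ, A ⊆ Finset.Icc 1 (r + 1) →
      ∑ k ∈ A, p k = (A.biUnion Sfin).card := by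
    intro A hA
    rw [Finset.card_biUnion (fun k hk k' hk' h => hdisj k (hA hk) k' (hA hk') h)]
    exact Finset.sum_congr rfl (fun k hk => hpS k (hA hk))
  have cover : ∀ (x : P) (k : ℕ), 1 ≤ k → k ≤ r + 1 →
      σ (q (k - 1)) < σ x → σ x ≤ σ (q k) →
      ∃ i j, 1 ≤ i ∧ i ≤ k ∧ k ≤ j ∧ j ≤ r + 1 ∧ x ∈ posetBlock q i j := by
    intro x k hk1 hk2 hlo hhi
    have hq0x : q 0 < x := by
      have h0 : σ (q 0) ≤ σ (q (k - 1)) := hle _ _ (hqle 0 (k - 1) (by omega) (by omega))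
      have hlt : σ (q 0) < σ x := h0.trans_lt hlo
      refine lt_of_le_of_ne (hmin x) (fun h => ?_)
      rw [h] at hlt
      exact absurd hlt (lt_irrefl _)
    set Ti := (Finset.Icc 1 (r + 1)).filter (fun t => q (t - 1) < x) with hTi
    have hne_i : Ti.Nonempty := ⟨1, by simp [hTi]; exact hq0x⟩
    set i := Ti.max' hne_i with hidef
    have hiT : i ∈ Ti := Ti.max'_mem hne_i
    rw [hTi, Finset.mem_filter, Finset.mem_Icc] at hiT
    obtain ⟨⟨hi1, hi2⟩, hi_lt⟩ := hiT
    set Tj := (Finset.Icc 1 (r + 1)).filter (fun t => x ≤ q t) with hTj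
    have hne_j : Tj.Nonempty := ⟨r + 1, by simp [hTj]; exact hmax x⟩
    set j := Tj.min' hne_j with hjdef
    have hjT : j ∈ Tj := Tj.min'_mem hne_j
    rw [hTj, Finset.mem_filter, Finset.mem_Icc] at hjT
    obtain ⟨⟨hj1, hj2⟩, hj_le⟩ := hjT
    have hik : i ≤ k := by
      by_contra h
      push_neg at h
      have hqk : q k ≤ q (i - 1) := hqle k (i - 1) (by omega) (by omega)
      exact absurd (hhi.trans_lt (hσ _ _ (hqk.trans_lt hi_lt))) (lt_irrefl _)
    have hkj : k ≤ j := by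
      by_contra h
      push_neg at h
      have hxq : x ≤ q (k - 1) := hj_le.trans (hqle j (k - 1) (by omega) (by omega))
      exact absurd (hlo.trans_le (hle _ _ hxq)) (lt_irrefl _)
    refine ⟨i, j, hi1, hik, hkj, hj2, ?_⟩
    rcases eq_or_lt_of_le (hik.trans hkj) with heq | hlt
    · rw [posetBlock, if_pos heq]
      by_cases h1 : i = 1
      · rw [if_pos h1]
        have hj_eq : j = 1 := by omega
        refine ⟨hmin x, ?_⟩
        rw [← hj_eq]
        exact hj_le
      · rw [if_neg h1]
        refine ⟨hi_lt, ?_⟩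
        rw [heq]
        exact hj_le
    · rw [posetBlock, if_neg (Nat.ne_of_lt hlt)]
      refine ⟨hi_lt, ?_, ?_, ?_⟩
      · refine lt_of_le_of_ne hj_le (fun hxj => ?_)
        have hjTi : j ∈ Ti := by
          rw [hTi, Finset.mem_filter, Finset.mem_Icc]
          refine ⟨⟨by omega, hj2⟩, ?_⟩
          rw [hxj]
          exact hq (j - 1) j (by omega) hj2
        have := Ti.le_max' j hjTi
        omega
      · intro hqi
        have hmem : i + 1 ∈ Ti := by
          rw [hTi, Finset.mem_filter, Finset.mem_Icc]
          refine ⟨⟨by omega, by omega⟩, by simpa using hqi⟩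
        have := Ti.le_max' _ hmem
        omega
      · intro hxj
        have hmem : j - 1 ∈ Tj := by
          rw [hTj, Finset.mem_filter, Finset.mem_Icc]
          exact ⟨⟨by omega, by omega⟩, hxj.le⟩
        have := Tj.min'_le _ hmem
        omega
  constructor
  · rw [hsum _ (Finset.Subset.refl _)]
    have huniv : (Finset.Icc 1 (r + 1)).biUnion Sfin = Finset.univ.erase (q 0) := by
      ext x
      simp only [Finset.mem_biUnion, Finset.mem_erase, Finset.mem_univ, and_true,
        Finset.mem_Icc, hSfin, Finset.mem_filter, true_and]
      constructor
      · rintro ⟨k, ⟨hk1, hk2⟩, h1, h2⟩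
        have hq0 : σ (q 0) ≤ σ (q (k - 1)) := hle _ _ (hqle 0 (k - 1) (by omega) (by omega))
        intro h
        rw [h] at h1
        exact absurd (hq0.trans_lt h1) (lt_irrefl _)
      · intro hx
        have hq0x : q 0 < x := lt_of_le_of_ne (hmin x) (Ne.symm hx)
        set T := (Finset.Icc 1 (r + 1)).filter (fun t => σ x ≤ σ (q t)) with hT
        have hneT : T.Nonempty := ⟨r + 1, by simp [hT]; exact hle _ _ (hmax x)⟩
        set k := T.min' hneT with hkdef
        have hkT : k ∈ T := T.min'_mem hneT
        rw [hT, Finset.mem_filter, Finset.mem_Icc] at hkT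
        obtain ⟨⟨hk1, hk2⟩, hk_le⟩ := hkT
        refine ⟨k, ⟨hk1, hk2⟩, ?_, hk_le⟩
        by_cases h1 : k = 1
        · rw [h1]
          simpa using hσ _ _ hq0x
        · have hnot : k - 1 ∉ T := by
            intro hmem
            have := T.min'_le _ hmem
            omega
          rw [hT, Finset.mem_filter, Finset.mem_Icc] at hnot
          push_neg at hnot
          exact hnot ⟨by omega, by omega⟩
    rw [huniv, Finset.card_erase_of_mem (Finset.mem_univ _), Finset.card_univ]
  · intro A hA
    rw [hsum A hA]
    have hsub : A.biUnion Sfin ⊆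
        ((Finset.Icc 1 (r + 1) ×ˢ Finset.Icc 1 (r + 1)).filter
            (fun ij => ij.1 ≤ ij.2 ∧ (Finset.Icc ij.1 ij.2 ∩ A).Nonempty)).biUnion
          (fun ij => (posetBlock q ij.1 ij.2).toFinite.toFinset) := by
      intro x hx
      rw [Finset.mem_biUnion] at hx
      obtain ⟨k, hkA, hxk⟩ := hx
      have hk := hA hkA
      rw [Finset.mem_Icc] at hk
      simp only [hSfin, Finset.mem_filter] at hxk
      obtain ⟨i, j, hi1, hik, hkj, hj, hmem⟩ := cover x k hk.1 hk.2 hxk.2.1 hxk.2.2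
      rw [Finset.mem_biUnion]
      refine ⟨(i, j), ?_, (Set.Finite.mem_toFinset _).mpr hmem⟩
      rw [Finset.mem_filter, Finset.mem_product, Finset.mem_Icc, Finset.mem_Icc]
      exact ⟨⟨⟨hi1, by omega⟩, ⟨by omega, hj⟩⟩, by omega,
        ⟨k, Finset.mem_inter.mpr ⟨Finset.mem_Icc.mpr ⟨hik, hkj⟩, hkA⟩⟩⟩
    calc (A.biUnion Sfin).card ≤ _ := Finset.card_le_card hsub
      _ ≤ ∑ ij ∈ (Finset.Icc 1 (r + 1) ×ˢ Finset.Icc 1 (r + 1)).filter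
            (fun ij => ij.1 ≤ ij.2 ∧ (Finset.Icc ij.1 ij.2 ∩ A).Nonempty),
          ((posetBlock q ij.1 ij.2).toFinite.toFinset).card := Finset.card_biUnion_le
      _ = _ := by
          refine Finset.sum_congr rfl (fun ij _ => ?_)
          rw [Set.ncard_eq_toFinset_card _ (Set.toFinite _)]
end

section
/- Let G = Σ_{1 ≤ i ≤ j ≤ r+1} c_{i,j} Δ_{[i,j]} ⊆ ℝ^{r+1} with all c_{i,j} positive integers, and let T be a plane binary tree on [r+1] with the binary search labeling, where descendants of node k form the interval [l_k, r_k]. Then the point v_T = (t_1,...,t_{r+1}) with t_k = Σ_{l_k ≤ i ≤ k ≤ j ≤ r_k} c_{i,j} is a vertex of G. -/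
/-!
Weight coordinate `k` by `#[lo k, hi k]`, the number of descendants of node `k`. For `i ≤ j`
every label in `[i, j]` descends from the lowest common ancestor `m` of `i` and `j`, and proper
descendants have strictly fewer descendants, so this linear functional attains its maximum on
`Δ_{[i,j]}` only at `e_m`. On the Minkowski sum `G` it is therefore maximized only at
`∑ c_{i,j} e_{m(i,j)}`, which is `v_T` since `m(i,j) = k` exactly when
`lo k ≤ i ≤ k ≤ j ≤ hi k`; a unique maximizer of a linear functional is an extreme point.
-/

open Pointwise

/-- Plane binary trees with nodes labeled by natural numbers. -/
inductive LBTree : Type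
  | leaf : LBTree
  | node : LBTree → ℕ → LBTree → LBTree

/-- The inorder list of labels. -/
def LBTree.inorder : LBTree → List ℕ
  | .leaf => []
  | .node l k r => l.inorder ++ k :: r.inorder

/-- The binary search property. -/
def LBTree.isBST : LBTree → Prop
  | .leaf => True
  | .node l k r =>
      (∀ m ∈ l.inorder, m < k) ∧ (∀ m ∈ r.inorder, k < m) ∧ l.isBST ∧ r.isBST

/-- `IsSubtree s t` : `s` occurs as a subtree of `t`. -/
def LBTree.IsSubtree (s : LBTree) : LBTree → Prop
  | .leaf => s = .leaf
  | .node l k r => s = .node l k r ∨ s.IsSubtree l ∨ s.IsSubtree r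

/-- The simplex `Δ_{[i,j]} ⊆ ℝ^{r+1}`: convex hull of the basis vectors `e k`
for `i ≤ k ≤ j` (coordinates indexed `1, ..., r+1`). -/
def intervalSimplex (r i j : ℕ) : Set (Fin (r + 1) → ℝ) :=
  convexHull ℝ {x | ∃ k, i ≤ k ∧ k ≤ j ∧
    x = fun t : Fin (r + 1) => if (t : ℕ) + 1 = k then (1 : ℝ) else 0}

def IsUniqueMaxOn {α β : Type*} [Preorder β] (f : α → β) (s : Set α) (p : α) : Prop :=
  p ∈ s ∧ ∀ x ∈ s, x ≠ p → f x < f p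

theorem IsUniqueMaxOn.le {α β : Type*} [Preorder β] {f : α → β} {s : Set α} {p x : α}
    (h : IsUniqueMaxOn f s p) (hx : x ∈ s) : f x ≤ f p := by
  rcases eq_or_ne x p with rfl | hne
  · exact le_rfl
  · exact (h.2 x hx hne).le

section Convex

variable {𝕜 E : Type*} [Field 𝕜] [LinearOrder 𝕜] [IsStrictOrderedRing 𝕜] [AddCommGroup E]
  [Module 𝕜 E]

theorem LinearMap.map_add_lt_of_lt_of_le (f : E →ₗ[𝕜] 𝕜) {x y p : E} {a b : 𝕜}
    (ha : 0 < a) (hb : 0 ≤ b) (hab : a + b = 1) (hx : f x < f p) (hy : f y ≤ f p) :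
    f (a • x + b • y) < f p := by
  calc f (a • x + b • y) = a * f x + b * f y := by simp
    _ < a * f p + b * f p := add_lt_add_of_lt_of_le (mul_lt_mul_of_pos_left hx ha)
        (mul_le_mul_of_nonneg_left hy hb)
    _ = f p := by rw [← add_mul, hab, one_mul]

theorem IsUniqueMaxOn.mem_extremePoints {f : E →ₗ[𝕜] 𝕜} {s : Set E} {p : E}
    (h : IsUniqueMaxOn f s p) : p ∈ s.extremePoints 𝕜 := by
  refine mem_extremePoints_iff_left.2 ⟨h.1, fun x hx y hy hp => ?_⟩
  by_contra hne
  obtain ⟨a, b, ha, hb, hab, rfl⟩ := hp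
  exact (f.map_add_lt_of_lt_of_le ha hb.le hab (h.2 x hx hne) (h.le hy)).ne rfl

theorem IsUniqueMaxOn.convexHull {f : E →ₗ[𝕜] 𝕜} {s : Set E} {p : E}
    (h : IsUniqueMaxOn f s p) : IsUniqueMaxOn f (_root_.convexHull 𝕜 s) p := by
  -- `{p}` together with the open half-space `f < f p` is convex.
  have hK : Convex 𝕜 {x | x = p ∨ f x < f p} := by
    refine convex_iff_pairwise_pos.2 fun x hx y hy hxy a b ha hb hab => Or.inr ?_
    have hx' : f x ≤ f p := hx.elim (fun h => h ▸ le_rfl) le_of_lt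
    have hy' : f y ≤ f p := hy.elim (fun h => h ▸ le_rfl) le_of_lt
    rcases hx with rfl | hx
    · rw [add_comm]
      exact f.map_add_lt_of_lt_of_le hb ha.le (by rw [add_comm, hab])
        (hy.resolve_left hxy.symm) hx'
    · exact f.map_add_lt_of_lt_of_le ha hb.le hab hx hy'
  have hsub : _root_.convexHull 𝕜 s ⊆ {x | x = p ∨ f x < f p} :=
    convexHull_min (fun x hx => (eq_or_ne x p).imp id (h.2 x hx)) hK
  exact ⟨subset_convexHull 𝕜 s h.1, fun x hx hne => (hsub hx).resolve_left hne⟩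

theorem IsUniqueMaxOn.smul {f : E →ₗ[𝕜] 𝕜} {s : Set E} {p : E} (h : IsUniqueMaxOn f s p)
    {c : 𝕜} (hc : 0 ≤ c) : IsUniqueMaxOn f (c • s) (c • p) := by
  refine ⟨Set.smul_mem_smul_set h.1, ?_⟩
  rintro _ ⟨x, hx, rfl⟩ hne
  have hc' : 0 < c := hc.lt_of_ne (by rintro rfl; simp at hne)
  rw [map_smul, map_smul, smul_eq_mul, smul_eq_mul]
  exact mul_lt_mul_of_pos_left (h.2 x hx fun hxp => hne (hxp ▸ rfl)) hc'

theorem IsUniqueMaxOn.finsetSum {ι : Type*} {f : E →ₗ[𝕜] 𝕜} {t : Finset ι} {s : ι → Set E}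
    {p : ι → E} (h : ∀ i ∈ t, IsUniqueMaxOn f (s i) (p i)) :
    IsUniqueMaxOn f (∑ i ∈ t, s i) (∑ i ∈ t, p i) := by
  refine ⟨Set.finsetSum_mem_finsetSum t s p fun i hi => (h i hi).1, fun x hx hne => ?_⟩
  obtain ⟨g, hg, rfl⟩ := (Set.mem_finsetSum t s x).1 hx
  obtain ⟨i, hi, hgi⟩ : ∃ i ∈ t, g i ≠ p i := by
    by_contra! hgp
    exact hne (Finset.sum_congr rfl hgp)
  rw [map_sum, map_sum]
  exact Finset.sum_lt_sum (fun j hj => (h j hj).le (hg hj)) ⟨i, hi, (h i hi).2 _ (hg hi) hgi⟩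

end Convex

namespace LBTree

theorem IsSubtree.trans {s t u : LBTree} (hst : s.IsSubtree t) (htu : t.IsSubtree u) :
    s.IsSubtree u := by
  induction u with
  | leaf => cases htu; exact hst
  | node l k r ihl ihr =>
    rcases htu with rfl | h | h
    · exact hst
    · exact Or.inr (Or.inl (ihl h))
    · exact Or.inr (Or.inr (ihr h))

theorem IsSubtree.inorder_subset {s t : LBTree} (h : s.IsSubtree t) : s.inorder ⊆ t.inorder := by
  induction t with
  | leaf => cases h; exact List.Subset.refl _
  | node l k r ihl ihr =>
    rcases h with rfl | h | h
    · exact List.Subset.refl _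
    · exact List.Subset.trans (ihl h) (List.subset_append_left _ _)
    · exact List.Subset.trans (ihr h)
        (List.Subset.trans (List.subset_cons_self _ _) (List.subset_append_right _ _))

theorem IsSubtree.isBST {s t : LBTree} (h : s.IsSubtree t) (ht : t.isBST) : s.isBST := by
  induction t with
  | leaf => cases h; trivial
  | node l k r ihl ihr =>
    rcases h with rfl | h | h
    · exact ht
    · exact ihl h ht.2.2.1
    · exact ihr h ht.2.2.2

theorem exists_isSubtree_of_mem_inorder {t : LBTree} {m : ℕ} (hm : m ∈ t.inorder) :
    ∃ l r, (node l m r).IsSubtree t := by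
  induction t with
  | leaf => cases hm
  | node l k r ihl ihr =>
    simp only [inorder, List.mem_append, List.mem_cons] at hm
    rcases hm with hm | rfl | hm
    · obtain ⟨l', r', h⟩ := ihl hm; exact ⟨l', r', Or.inr (Or.inl h)⟩
    · exact ⟨l, r, Or.inl rfl⟩
    · obtain ⟨l', r', h⟩ := ihr hm; exact ⟨l', r', Or.inr (Or.inr h)⟩

theorem root_notMem_inorder_of_isSubtree {l r l' r' : LBTree} {a b : ℕ} (ht : (node l b r).isBST)
    (h : (node l' a r').IsSubtree (node l b r)) (hab : a ≠ b) : b ∉ (node l' a r').inorder := by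
  intro hb
  rcases h with h | h | h
  · exact hab (node.inj h).2.1
  · exact (ht.1 b (h.inorder_subset hb)).false
  · exact (ht.2.1 b (h.inorder_subset hb)).false

theorem mem_left_of_lt {l r : LBTree} {k m : ℕ} (ht : (node l k r).isBST)
    (hm : m ∈ (node l k r).inorder) (hmk : m < k) : m ∈ l.inorder := by
  simp only [inorder, List.mem_append, List.mem_cons] at hm
  rcases hm with hm | rfl | hm
  exacts [hm, absurd hmk (lt_irrefl m), absurd (ht.2.1 m hm) hmk.not_gt]

theorem mem_right_of_lt {l r : LBTree} {k m : ℕ} (ht : (node l k r).isBST)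
    (hm : m ∈ (node l k r).inorder) (hkm : k < m) : m ∈ r.inorder := by
  simp only [inorder, List.mem_append, List.mem_cons] at hm
  rcases hm with hm | rfl | hm
  exacts [absurd (ht.1 m hm) hkm.not_gt, absurd hkm (lt_irrefl m), hm]

theorem exists_isSubtree_root_between {t : LBTree} (ht : t.isBST) {i j : ℕ} (hij : i ≤ j)
    (hi : i ∈ t.inorder) (hj : j ∈ t.inorder) :
    ∃ l m r, (node l m r).IsSubtree t ∧ i ≤ m ∧ m ≤ j ∧
      i ∈ (node l m r).inorder ∧ j ∈ (node l m r).inorder := by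
  induction t with
  | leaf => cases hi
  | node l k r ihl ihr =>
    by_cases hjk : j < k
    · obtain ⟨l', m, r', hs, h⟩ := ihl ht.2.2.1 (mem_left_of_lt ht hi (by omega))
        (mem_left_of_lt ht hj hjk)
      exact ⟨l', m, r', Or.inr (Or.inl hs), h⟩
    by_cases hki : k < i
    · obtain ⟨l', m, r', hs, h⟩ := ihr ht.2.2.2 (mem_right_of_lt ht hi hki)
        (mem_right_of_lt ht hj (by omega))
      exact ⟨l', m, r', Or.inr (Or.inr hs), h⟩
    exact ⟨l, k, r, Or.inl rfl, by omega, by omega, hi, hj⟩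

theorem mem_inorder_node (l r : LBTree) (k : ℕ) : k ∈ (node l k r).inorder := by
  simp [inorder]

def HasDescendantIntervals (t : LBTree) (lo hi : ℕ → ℕ) : Prop :=
  ∀ l k r, (node l k r).IsSubtree t → ∀ m, m ∈ (node l k r).inorder ↔ lo k ≤ m ∧ m ≤ hi k

namespace HasDescendantIntervals

variable {t : LBTree} {lo hi : ℕ → ℕ}

theorem Icc_ssubset_Icc (hd : t.HasDescendantIntervals lo hi) (ht : t.isBST) {a b : ℕ}
    (hb : b ∈ t.inorder) (ha : a ∈ Finset.Icc (lo b) (hi b)) (hab : a ≠ b) :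
    Finset.Icc (lo a) (hi a) ⊂ Finset.Icc (lo b) (hi b) := by
  obtain ⟨l, r, hsb⟩ := exists_isSubtree_of_mem_inorder hb
  have hdb := hd l b r hsb
  obtain ⟨l', r', hsa⟩ := exists_isSubtree_of_mem_inorder ((hdb a).2 (Finset.mem_Icc.1 ha))
  have hda := hd l' a r' (hsa.trans hsb)
  have hsub : Finset.Icc (lo a) (hi a) ⊆ Finset.Icc (lo b) (hi b) := fun m hm =>
    Finset.mem_Icc.2 ((hdb m).1 (hsa.inorder_subset ((hda m).2 (Finset.mem_Icc.1 hm))))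
  refine (Finset.ssubset_iff_of_subset hsub).2 ⟨b, ?_, fun hb' => ?_⟩
  · exact Finset.mem_Icc.2 ((hdb b).1 (mem_inorder_node l r b))
  · exact root_notMem_inorder_of_isSubtree (hsb.isBST ht) hsa hab
      ((hda b).2 (Finset.mem_Icc.1 hb'))

theorem exists_between (hd : t.HasDescendantIntervals lo hi) (ht : t.isBST) {i j : ℕ}
    (hij : i ≤ j) (hit : i ∈ t.inorder) (hjt : j ∈ t.inorder) :
    ∃ m ∈ t.inorder, lo m ≤ i ∧ i ≤ m ∧ m ≤ j ∧ j ≤ hi m := by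
  obtain ⟨l, m, r, hs, him, hmj, hil, hjl⟩ := exists_isSubtree_root_between ht hij hit hjt
  exact ⟨m, hs.inorder_subset (mem_inorder_node l r m), ((hd l m r hs i).1 hil).1, him, hmj,
    ((hd l m r hs j).1 hjl).2⟩

theorem eq_of_between (hd : t.HasDescendantIntervals lo hi) (ht : t.isBST) {i j a b : ℕ}
    (ha : a ∈ t.inorder) (hb : b ∈ t.inorder) (ha' : lo a ≤ i ∧ i ≤ a ∧ a ≤ j ∧ j ≤ hi a)
    (hb' : lo b ≤ i ∧ i ≤ b ∧ b ≤ j ∧ j ≤ hi b) : a = b := by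
  by_contra hab
  have hab' := Finset.card_lt_card
    (hd.Icc_ssubset_Icc ht hb (Finset.mem_Icc.2 ⟨by omega, by omega⟩) hab)
  have hba := Finset.card_lt_card
    (hd.Icc_ssubset_Icc ht ha (Finset.mem_Icc.2 ⟨by omega, by omega⟩) (Ne.symm hab))
  omega

theorem filter_between_eq (hd : t.HasDescendantIntervals lo hi) (ht : t.isBST)
    {s : Finset (ℕ × ℕ)} {m : ℕ × ℕ → ℕ}
    (hm : ∀ ij ∈ s, ij.1 ≤ ij.2 → m ij ∈ t.inorder ∧
      lo (m ij) ≤ ij.1 ∧ ij.1 ≤ m ij ∧ m ij ≤ ij.2 ∧ ij.2 ≤ hi (m ij))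
    {k : ℕ} (hk : k ∈ t.inorder) :
    s.filter (fun ij => lo k ≤ ij.1 ∧ ij.1 ≤ k ∧ k ≤ ij.2 ∧ ij.2 ≤ hi k) =
      s.filter (fun ij => ij.1 ≤ ij.2 ∧ m ij = k) := by
  refine Finset.filter_congr fun ij hij => ⟨fun hk' => ?_, ?_⟩
  · obtain ⟨hm_mem, hm'⟩ := hm ij hij (by omega)
    exact ⟨by omega, hd.eq_of_between ht hm_mem hk hm' hk'⟩
  · rintro ⟨hle, rfl⟩
    exact (hm ij hij hle).2

end HasDescendantIntervals

end LBTree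

/-- The basis vector `e k`, with coordinates indexed `1, ..., r + 1` as in `intervalSimplex`. -/
def unitVec (r k : ℕ) : Fin (r + 1) → ℝ := fun t => if (t : ℕ) + 1 = k then 1 else 0

def labelWeight (r : ℕ) (w : ℕ → ℝ) : (Fin (r + 1) → ℝ) →ₗ[ℝ] ℝ :=
  ∑ t : Fin (r + 1), w (t + 1) • LinearMap.proj t

theorem labelWeight_unitVec (r : ℕ) (w : ℕ → ℝ) {k : ℕ} (hk : 1 ≤ k) (hkr : k ≤ r + 1) :
    labelWeight r w (unitVec r k) = w k := by
  rw [labelWeight, LinearMap.sum_apply, Finset.sum_eq_single ⟨k - 1, by omega⟩]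
  · simp [unitVec, Nat.sub_add_cancel hk]
  · intro t _ ht
    have htk : (t : ℕ) + 1 ≠ k := fun h => ht (Fin.ext (by simp only; omega))
    simp [unitVec, htk]
  · simp

theorem finsetSum_smul_unitVec_apply {ι : Type*} (r : ℕ) (s : Finset ι) (a : ι → ℝ) (m : ι → ℕ)
    (k : Fin (r + 1)) :
    (∑ i ∈ s, a i • unitVec r (m i)) k = ∑ i ∈ s with m i = k + 1, a i := by
  classical
  simp [Finset.sum_apply, unitVec, Finset.sum_filter, eq_comm]

theorem isUniqueMaxOn_intervalSimplex {r i j m : ℕ} {w : ℕ → ℝ} (hi : 1 ≤ i) (hj : j ≤ r + 1)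
    (him : i ≤ m) (hmj : m ≤ j) (hw : ∀ k, i ≤ k → k ≤ j → k ≠ m → w k < w m) :
    IsUniqueMaxOn (labelWeight r w) (intervalSimplex r i j) (unitVec r m) := by
  refine IsUniqueMaxOn.convexHull ⟨⟨m, him, hmj, rfl⟩, ?_⟩
  rintro _ ⟨k, hik, hkj, rfl⟩ hne
  change labelWeight r w (unitVec r k) < labelWeight r w (unitVec r m)
  rw [labelWeight_unitVec r w (by omega) (by omega), labelWeight_unitVec r w (by omega) (by omega)]
  exact hw k hik hkj fun hkm => hne (hkm ▸ rfl)

theorem binary_tree_point_is_vertex_general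
    (r : ℕ) (c : ℕ → ℕ → ℕ)
    (lt : LBTree) (hbst : lt.isBST)
    (hlabels : lt.inorder.Perm (List.range' 1 (r + 1)))
    (lo hi : ℕ → ℕ)
    (hdesc : ∀ l : LBTree, ∀ k : ℕ, ∀ rt : LBTree,
      (LBTree.node l k rt).IsSubtree lt →
      ∀ m : ℕ, m ∈ (LBTree.node l k rt).inorder ↔ (lo k ≤ m ∧ m ≤ hi k))
    (v : Fin (r + 1) → ℝ)
    (hv : ∀ k : Fin (r + 1), v k =
      ∑ ij ∈ (Finset.Icc 1 (r + 1) ×ˢ Finset.Icc 1 (r + 1)).filter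
          (fun ij => lo ((k : ℕ) + 1) ≤ ij.1 ∧ ij.1 ≤ (k : ℕ) + 1 ∧
            (k : ℕ) + 1 ≤ ij.2 ∧ ij.2 ≤ hi ((k : ℕ) + 1)),
        (c ij.1 ij.2 : ℝ)) :
    v ∈ Set.extremePoints ℝ
      (∑ ij ∈ (Finset.Icc 1 (r + 1) ×ˢ Finset.Icc 1 (r + 1)).filter
          (fun ij => ij.1 ≤ ij.2),
        (c ij.1 ij.2 : ℝ) • intervalSimplex r ij.1 ij.2) := by
  classical
  have hd : lt.HasDescendantIntervals lo hi := hdesc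
  have hlabel : ∀ k, k ∈ lt.inorder ↔ 1 ≤ k ∧ k ≤ r + 1 := fun k => by
    rw [hlabels.mem_iff, List.mem_range'_1]; omega
  set P := Finset.Icc 1 (r + 1) ×ˢ Finset.Icc 1 (r + 1)
  have hP : ∀ ij ∈ P, (1 ≤ ij.1 ∧ ij.1 ≤ r + 1) ∧ 1 ≤ ij.2 ∧ ij.2 ≤ r + 1 := fun ij hij => by
    simpa only [P, Finset.mem_product, Finset.mem_Icc] using hij
  -- `m ij` is the lowest common ancestor of `ij.1` and `ij.2`.
  have hlca : ∀ ij ∈ P, ij.1 ≤ ij.2 → ∃ m ∈ lt.inorder,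
      lo m ≤ ij.1 ∧ ij.1 ≤ m ∧ m ≤ ij.2 ∧ ij.2 ≤ hi m := fun ij hij hle =>
    hd.exists_between hbst hle ((hlabel _).2 (hP ij hij).1) ((hlabel _).2 (hP ij hij).2)
  choose! m hm using hlca
  have hv' : v = ∑ ij ∈ P with ij.1 ≤ ij.2, (c ij.1 ij.2 : ℝ) • unitVec r (m ij) := by
    funext k
    rw [hv k, hd.filter_between_eq hbst hm ((hlabel _).2 ⟨by omega, by omega⟩),
      ← Finset.filter_filter, finsetSum_smul_unitVec_apply]
  rw [hv']
  let w : ℕ → ℝ := fun k => (Finset.Icc (lo k) (hi k)).card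
  refine IsUniqueMaxOn.mem_extremePoints (f := labelWeight r w)
    (IsUniqueMaxOn.finsetSum fun ij hij => ?_)
  obtain ⟨hij, hle⟩ := Finset.mem_filter.1 hij
  obtain ⟨⟨h1, -⟩, -, h2⟩ := hP ij hij
  obtain ⟨hm_mem, hlo, him, hmj, hhi⟩ := hm ij hij hle
  refine (isUniqueMaxOn_intervalSimplex h1 h2 him hmj fun k hik hkj hkm => ?_).smul
    (Nat.cast_nonneg _)
  simp only [w]
  exact_mod_cast Finset.card_lt_card
    (hd.Icc_ssubset_Icc hbst hm_mem (Finset.mem_Icc.2 ⟨by omega, by omega⟩) hkm)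

/-- let `G = ∑_{1 ≤ i ≤ j ≤ r+1} c i j • Δ_{[i,j]}` with all
`c i j` positive integers, and let `lt` be a plane binary tree on `[r+1]` with
the binary search labeling, the set of descendants of the node labeled `k`
being the interval `[lo k, hi k]`. Then the point `v` with
`v k = ∑_{lo k ≤ i ≤ k ≤ j ≤ hi k} c i j` is a vertex (extreme point) of `G`. -/
theorem binary_tree_point_is_vertex
    (r : ℕ) (c : ℕ → ℕ → ℕ)
    (hc : ∀ i j, 1 ≤ i → i ≤ j → j ≤ r + 1 → 0 < c i j)
    (lt : LBTree) (hbst : lt.isBST)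
    (hlabels : lt.inorder.Perm (List.range' 1 (r + 1)))
    (lo hi : ℕ → ℕ)
    (hdesc : ∀ l : LBTree, ∀ k : ℕ, ∀ rt : LBTree,
      (LBTree.node l k rt).IsSubtree lt →
      ∀ m : ℕ, m ∈ (LBTree.node l k rt).inorder ↔ (lo k ≤ m ∧ m ≤ hi k))
    (v : Fin (r + 1) → ℝ)
    (hv : ∀ k : Fin (r + 1), v k =
      ∑ ij ∈ (Finset.Icc 1 (r + 1) ×ˢ Finset.Icc 1 (r + 1)).filter
          (fun ij => lo ((k : ℕ) + 1) ≤ ij.1 ∧ ij.1 ≤ (k : ℕ) + 1 ∧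
            (k : ℕ) + 1 ≤ ij.2 ∧ ij.2 ≤ hi ((k : ℕ) + 1)),
        (c ij.1 ij.2 : ℝ)) :
    v ∈ Set.extremePoints ℝ
      (∑ ij ∈ (Finset.Icc 1 (r + 1) ×ˢ Finset.Icc 1 (r + 1)).filter
          (fun ij => ij.1 ≤ ij.2),
        (c ij.1 ij.2 : ℝ) • intervalSimplex r ij.1 ij.2) :=
  binary_tree_point_is_vertex_general r c lt hbst hlabels lo hi hdesc v hv
end

section
/- Subdivisions of the staircase shape D_{r+1} = {(i,j) : 1 ≤ i ≤ j ≤ r+1} into r+1 rectangles R_1,...,R_{r+1}, where each R_k is a rectangle (a product of an interval of i's and an interval of j's intersected with D) containing the diagonal box (k,k), are in bijection with plane binary trees on r+1 nodes; in particular, their number is the Catalan number C_{r+1} = (1/(r+2)) · binomial(2(r+1), r+1). -/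
/-!
In a subdivision of the staircase whose diagonal boxes are `a, …, b`, the corner box `(a, b)`
lies in some rectangle `R k`, which is then forced to be the whole hook `[a, k] × [k, b]`.
No other rectangle can cross this hook, so the remaining rectangles split into subdivisions of the
two staircases on `a, …, k - 1` and `k + 1, …, b`, and conversely any two such subdivisions glue
back along the hook. This is the recursive structure of a plane binary tree with root `k`, and it
gives the Catalan recurrence `C (n + 1) = ∑ i, C i * C (n - i)` for the number of subdivisions.
Binary trees satisfy the same count, and two finite sets of equal size are in bijection.
-/

/-- Plane binary trees. -/
inductive PBTree : Type
  | leaf : PBTree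
  | node : PBTree → PBTree → PBTree

/-- The number of nodes of a plane binary tree. -/
def PBTree.size : PBTree → ℕ
  | .leaf => 0
  | .node l r => l.size + r.size + 1

/-- A subdivision of the staircase shape `D_{r+1} = {(i,j) : 1 ≤ i ≤ j ≤ r+1}`
into `r+1` rectangles `R k`, each a rectangle `[a, k] × [k, b]` of boxes
containing the diagonal box `(k, k)`, which together partition `D_{r+1}`. -/
def IsStaircaseSubdiv (r : ℕ) (R : Fin (r + 1) → Finset (ℕ × ℕ)) : Prop :=
  (∀ k : Fin (r + 1), ∃ a b : ℕ, 1 ≤ a ∧ a ≤ (k : ℕ) + 1 ∧ (k : ℕ) + 1 ≤ b ∧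
      b ≤ r + 1 ∧ R k = Finset.Icc a ((k : ℕ) + 1) ×ˢ Finset.Icc ((k : ℕ) + 1) b) ∧
  (∀ p : ℕ × ℕ, (1 ≤ p.1 ∧ p.1 ≤ p.2 ∧ p.2 ≤ r + 1) ↔ ∃! k : Fin (r + 1), p ∈ R k)

open Finset

lemma catalan_ne_zero (n : ℕ) : catalan n ≠ 0 := by
  intro h
  have := succ_mul_catalan_eq_centralBinom n
  rw [h, mul_zero] at this
  exact Nat.centralBinom_ne_zero n this.symm

namespace PBTree

def toBinaryTree : PBTree → BinaryTree Unit
  | leaf => .nil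
  | node l r => .node () l.toBinaryTree r.toBinaryTree

def ofBinaryTree : BinaryTree Unit → PBTree
  | .nil => leaf
  | .node _ l r => node (ofBinaryTree l) (ofBinaryTree r)

def equivBinaryTree : PBTree ≃ BinaryTree Unit where
  toFun := toBinaryTree
  invFun := ofBinaryTree
  left_inv t := by induction t <;> simp_all [toBinaryTree, ofBinaryTree]
  right_inv t := by induction t <;> simp_all [toBinaryTree, ofBinaryTree]

lemma numNodes_toBinaryTree (t : PBTree) : t.toBinaryTree.numNodes = t.size := by
  induction t <;> simp_all [toBinaryTree, size, BinaryTree.numNodes]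

lemma card_size_eq (n : ℕ) : Nat.card {t : PBTree // t.size = n} = catalan n := by
  rw [← BinaryTree.treesOfNumNodesEq_card_eq_catalan, ← Nat.card_eq_finsetCard]
  exact Nat.card_congr <| equivBinaryTree.subtypeEquiv fun t => by
    simp [equivBinaryTree, numNodes_toBinaryTree]

end PBTree

def diagRect (a k b : ℕ) : Finset (ℕ × ℕ) := Icc a k ×ˢ Icc k b

lemma mem_diagRect {a k b : ℕ} {p : ℕ × ℕ} :
    p ∈ diagRect a k b ↔ a ≤ p.1 ∧ p.1 ≤ k ∧ k ≤ p.2 ∧ p.2 ≤ b := by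
  simp [diagRect, and_assoc]

/-- Rectangles are indexed by their diagonal box `k ∈ ℕ`, with `R k = ∅` off `[lo, hi)`, so that
sub-staircases can be cut out and glued back without reindexing. -/
structure IsSubdivision (lo hi : ℕ) (R : ℕ → Finset (ℕ × ℕ)) : Prop where
  eq_diagRect : ∀ k, lo ≤ k → k < hi →
    ∃ a b, lo ≤ a ∧ a ≤ k ∧ k ≤ b ∧ b < hi ∧ R k = diagRect a k b
  eq_empty : ∀ k, k < lo ∨ hi ≤ k → R k = ∅
  exists_mem : ∀ p : ℕ × ℕ, lo ≤ p.1 → p.1 ≤ p.2 → p.2 < hi → ∃ k, p ∈ R k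
  eq_of_mem : ∀ {p k l}, p ∈ R k → p ∈ R l → k = l

abbrev Subdivision (lo hi : ℕ) : Type := {R : ℕ → Finset (ℕ × ℕ) // IsSubdivision lo hi R}

def restrictIco (lo hi : ℕ) (R : ℕ → Finset (ℕ × ℕ)) (k : ℕ) : Finset (ℕ × ℕ) :=
  if lo ≤ k ∧ k < hi then R k else ∅

lemma mem_restrictIco {lo hi k : ℕ} {R : ℕ → Finset (ℕ × ℕ)} {p : ℕ × ℕ} :
    p ∈ restrictIco lo hi R k ↔ (lo ≤ k ∧ k < hi) ∧ p ∈ R k := by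
  unfold restrictIco; split_ifs <;> simp_all

def glue (lo k hi : ℕ) (L R : ℕ → Finset (ℕ × ℕ)) (i : ℕ) : Finset (ℕ × ℕ) :=
  if i = k then diagRect lo k hi else L i ∪ R i

namespace IsSubdivision

variable {lo hi : ℕ} {R : ℕ → Finset (ℕ × ℕ)}

lemma bounds_of_mem (h : IsSubdivision lo hi R) {p : ℕ × ℕ} {k : ℕ} (hp : p ∈ R k) :
    lo ≤ p.1 ∧ p.1 ≤ k ∧ k ≤ p.2 ∧ p.2 < hi := by
  by_cases hk : lo ≤ k ∧ k < hi
  · obtain ⟨a, b, ha, -, -, hb, hR⟩ := h.eq_diagRect k hk.1 hk.2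
    rw [hR, mem_diagRect] at hp
    omega
  · rw [h.eq_empty k (by omega)] at hp
    simp at hp

lemma empty_of_le (h : hi ≤ lo) : IsSubdivision lo hi fun _ => ∅ where
  eq_diagRect _ _ _ := by omega
  eq_empty _ _ := rfl
  exists_mem _ _ _ _ := by omega
  eq_of_mem hp := by simp at hp

lemma exists_top (h : IsSubdivision lo (hi + 1) R) (hlo : lo ≤ hi) :
    ∃ k, lo ≤ k ∧ k ≤ hi ∧ R k = diagRect lo k hi := by
  obtain ⟨k, hk⟩ := h.exists_mem (lo, hi) le_rfl hlo (Nat.lt_succ_self hi)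
  have hbd := h.bounds_of_mem hk
  obtain ⟨a, b, ha, -, -, hb, hR⟩ := h.eq_diagRect k (hbd.1.trans hbd.2.1) (by omega)
  rw [hR, mem_diagRect] at hk
  obtain rfl : a = lo := by omega
  obtain rfl : b = hi := by omega
  exact ⟨k, by omega, by omega, hR⟩

lemma mem_of_mem_of_le (h : IsSubdivision lo hi R) {p q : ℕ × ℕ} {k : ℕ} (hp : p ∈ R k)
    (h₁ : p.1 ≤ q.1) (h₂ : q.1 ≤ k) (h₃ : k ≤ q.2) (h₄ : q.2 ≤ p.2) : q ∈ R k := by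
  have hbd := h.bounds_of_mem hp
  obtain ⟨a, b, -, -, -, -, hR⟩ := h.eq_diagRect k (by omega) (by omega)
  rw [hR, mem_diagRect] at hp ⊢
  omega

lemma snd_lt_of_mem_of_top (h : IsSubdivision lo (hi + 1) R) {k : ℕ}
    (hk : R k = diagRect lo k hi) {i : ℕ} {p : ℕ × ℕ} (hik : i < k) (hp : p ∈ R i) : p.2 < k := by
  by_contra! hkp
  have hbd := h.bounds_of_mem hp
  have hmem : (i, k) ∈ R i := h.mem_of_mem_of_le hp hbd.2.1 le_rfl hik.le hkp
  have hmem' : (i, k) ∈ R k := by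
    rw [hk, mem_diagRect]
    omega
  exact hik.ne (h.eq_of_mem hmem hmem')

lemma lt_fst_of_mem_of_top (h : IsSubdivision lo (hi + 1) R) {k : ℕ} (hlo : lo ≤ k)
    (hk : R k = diagRect lo k hi) {i : ℕ} {p : ℕ × ℕ} (hki : k < i) (hp : p ∈ R i) : k < p.1 := by
  by_contra! hpk
  have hbd := h.bounds_of_mem hp
  have hmem : (k, i) ∈ R i := h.mem_of_mem_of_le hp hpk hki.le le_rfl hbd.2.2.1
  have hmem' : (k, i) ∈ R k := by
    rw [hk, mem_diagRect]
    omega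
  exact hki.ne' (h.eq_of_mem hmem hmem')

lemma glue_restrictIco (h : IsSubdivision lo (hi + 1) R) {k : ℕ}
    (hk : R k = diagRect lo k hi) :
    glue lo k hi (restrictIco lo k R) (restrictIco (k + 1) (hi + 1) R) = R := by
  funext i
  by_cases hik : i = k
  · rw [glue, if_pos hik, hik, hk]
  · rw [glue, if_neg hik, restrictIco, restrictIco]
    split_ifs with h₁ h₂ h₂
    · omega
    · exact union_empty _
    · exact empty_union _
    · rw [union_empty, h.eq_empty i (by omega)]

variable {k : ℕ} {L : ℕ → Finset (ℕ × ℕ)}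

lemma mem_glue (hL : IsSubdivision lo k L) (hR : IsSubdivision (k + 1) (hi + 1) R)
    {i : ℕ} {p : ℕ × ℕ} :
    p ∈ glue lo k hi L R i ↔ i = k ∧ p ∈ diagRect lo k hi ∨ p ∈ L i ∨ p ∈ R i := by
  by_cases hik : i = k
  · subst hik
    simp [glue, hL.eq_empty i (by omega), hR.eq_empty i (by omega)]
  · simp [glue, hik]

lemma restrictIco_glue_left (hL : IsSubdivision lo k L) (hR : IsSubdivision (k + 1) (hi + 1) R) :
    restrictIco lo k (glue lo k hi L R) = L := by
  funext i
  rw [restrictIco]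
  split_ifs with hi'
  · rw [glue, if_neg (by omega), hR.eq_empty i (by omega), union_empty]
  · exact (hL.eq_empty i (by omega)).symm

lemma restrictIco_glue_right (hL : IsSubdivision lo k L)
    (hR : IsSubdivision (k + 1) (hi + 1) R) :
    restrictIco (k + 1) (hi + 1) (glue lo k hi L R) = R := by
  funext i
  rw [restrictIco]
  split_ifs with hi'
  · rw [glue, if_neg (by omega), hL.eq_empty i (by omega), empty_union]
  · exact (hR.eq_empty i (by omega)).symm

lemma restrictIco (h : IsSubdivision lo hi R) {lo' hi' : ℕ} (hlo : lo ≤ lo') (hhi : hi' ≤ hi)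
    (hsub : ∀ k p, lo' ≤ k → k < hi' → p ∈ R k → lo' ≤ p.1 ∧ p.2 < hi') :
    IsSubdivision lo' hi' (restrictIco lo' hi' R) where
  eq_diagRect k hk₁ hk₂ := by
    obtain ⟨a, b, -, hak, hkb, -, hR⟩ := h.eq_diagRect k (by omega) (by omega)
    have hab := hsub k (a, b) hk₁ hk₂ (by rw [hR, mem_diagRect]; omega)
    exact ⟨a, b, hab.1, hak, hkb, hab.2, by rw [_root_.restrictIco, if_pos ⟨hk₁, hk₂⟩, hR]⟩
  eq_empty k hk := by rw [_root_.restrictIco, if_neg (by omega)]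
  exists_mem p h₁ h₂ h₃ := by
    obtain ⟨k, hk⟩ := h.exists_mem p (by omega) h₂ (by omega)
    have := h.bounds_of_mem hk
    exact ⟨k, mem_restrictIco.2 ⟨by omega, hk⟩⟩
  eq_of_mem hp hq := h.eq_of_mem (mem_restrictIco.1 hp).2 (mem_restrictIco.1 hq).2


lemma glue (hL : IsSubdivision lo k L) (hR : IsSubdivision (k + 1) (hi + 1) R) (hlo : lo ≤ k)
    (hk : k ≤ hi) : IsSubdivision lo (hi + 1) (glue lo k hi L R) where
  eq_diagRect i h₁ h₂ := by
    rcases lt_trichotomy i k with hik | rfl | hki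
    · obtain ⟨a, b, ha, hai, hib, hb, hLi⟩ := hL.eq_diagRect i h₁ hik
      refine ⟨a, b, ha, hai, hib, by omega, ?_⟩
      rw [_root_.glue, if_neg hik.ne, hLi, hR.eq_empty i (by omega), union_empty]
    · exact ⟨lo, hi, le_rfl, hlo, hk, by omega, if_pos rfl⟩
    · obtain ⟨a, b, ha, hai, hib, hb, hRi⟩ := hR.eq_diagRect i hki h₂
      refine ⟨a, b, by omega, hai, hib, hb, ?_⟩
      rw [_root_.glue, if_neg hki.ne', hRi, hL.eq_empty i (by omega), empty_union]
  eq_empty i hi' := by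
    rw [_root_.glue, if_neg (by omega), hL.eq_empty i (by omega), hR.eq_empty i (by omega),
      union_empty]
  exists_mem p h₁ h₂ h₃ := by
    by_cases hpk : p.2 < k
    · obtain ⟨i, hp⟩ := hL.exists_mem p h₁ h₂ hpk
      exact ⟨i, (mem_glue hL hR).2 (Or.inr (Or.inl hp))⟩
    by_cases hkp : k < p.1
    · obtain ⟨i, hp⟩ := hR.exists_mem p hkp h₂ h₃
      exact ⟨i, (mem_glue hL hR).2 (Or.inr (Or.inr hp))⟩
    exact ⟨k, (mem_glue hL hR).2 (Or.inl ⟨rfl, mem_diagRect.2 (by omega)⟩)⟩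
  eq_of_mem {p i j} hp hq := by
    have region : ∀ {i}, p ∈ _root_.glue lo k hi L R i →
        (i = k ∧ p.1 ≤ k ∧ k ≤ p.2) ∨ (p ∈ L i ∧ p.1 ≤ p.2 ∧ p.2 < k) ∨
          (p ∈ R i ∧ k < p.1 ∧ p.1 ≤ p.2) := by
      intro i hp
      rcases (mem_glue hL hR).1 hp with ⟨rfl, hp⟩ | hp | hp
      · rw [mem_diagRect] at hp
        omega
      · have := hL.bounds_of_mem hp
        exact Or.inr (Or.inl ⟨hp, by omega⟩)
      · have := hR.bounds_of_mem hp
        exact Or.inr (Or.inr ⟨hp, by omega⟩)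
    rcases region hp with hp | ⟨hp, hp'⟩ | ⟨hp, hp'⟩ <;>
      rcases region hq with hq | ⟨hq, hq'⟩ | ⟨hq, hq'⟩ <;>
      first | omega | exact hL.eq_of_mem hp hq | exact hR.eq_of_mem hp hq

end IsSubdivision

def glueMap (lo n : ℕ) :
    (Σ i : Fin (n + 1), Subdivision lo (lo + i) × Subdivision (lo + i + 1) (lo + n + 1)) →
      Subdivision lo (lo + n + 1) :=
  fun x => ⟨glue lo (lo + x.1) (lo + n) x.2.1.1 x.2.2.1,
    x.2.1.2.glue x.2.2.2 (Nat.le_add_right _ _) (by have := x.1.isLt; omega)⟩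

lemma glueMap_injective (lo n : ℕ) : Function.Injective (glueMap lo n) := by
  rintro ⟨i, ⟨L, hL⟩, ⟨R, hR⟩⟩ ⟨j, ⟨L', hL'⟩, ⟨R', hR'⟩⟩ heq
  have hglue : glue lo (lo + i) (lo + n) L R = glue lo (lo + j) (lo + n) L' R' :=
    congrArg Subtype.val heq
  obtain rfl : i = j := by
    have hi := (hL.mem_glue hR (i := lo + i) (p := (lo, lo + n))).2
      (Or.inl ⟨rfl, mem_diagRect.2 (by omega)⟩)
    have hj := (hL'.mem_glue hR' (i := lo + j) (p := (lo, lo + n))).2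
      (Or.inl ⟨rfl, mem_diagRect.2 (by omega)⟩)
    rw [hglue] at hi
    have := (hL'.glue hR' (by omega) (by omega)).eq_of_mem hi hj
    exact Fin.ext (by omega)
  obtain rfl : L = L' := by
    rw [← hL.restrictIco_glue_left hR, hglue, hL'.restrictIco_glue_left hR']
  obtain rfl : R = R' := by
    rw [← hL.restrictIco_glue_right hR, hglue, hL'.restrictIco_glue_right hR']
  rfl

lemma glueMap_surjective (lo n : ℕ) : Function.Surjective (glueMap lo n) := by
  rintro ⟨R, h⟩
  obtain ⟨k, hlo, hkn, hk⟩ := h.exists_top (by omega)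
  obtain ⟨i, rfl⟩ : ∃ i, k = lo + i := ⟨k - lo, by omega⟩
  have hL := h.restrictIco le_rfl (by omega) fun j p _ hj hp =>
    ⟨(h.bounds_of_mem hp).1, h.snd_lt_of_mem_of_top hk hj hp⟩
  have hR := h.restrictIco (by omega) le_rfl fun j p hj _ hp =>
    ⟨h.lt_fst_of_mem_of_top hlo hk hj hp, (h.bounds_of_mem hp).2.2.2⟩
  exact ⟨⟨⟨i, by omega⟩, ⟨_, hL⟩, ⟨_, hR⟩⟩, Subtype.ext (h.glue_restrictIco hk)⟩

noncomputable def glueEquiv (lo n : ℕ) :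
    (Σ i : Fin (n + 1), Subdivision lo (lo + i) × Subdivision (lo + i + 1) (lo + n + 1)) ≃
      Subdivision lo (lo + n + 1) :=
  Equiv.ofBijective (glueMap lo n) ⟨glueMap_injective lo n, glueMap_surjective lo n⟩

lemma card_subdivision_of_le {lo hi : ℕ} (h : hi ≤ lo) : Nat.card (Subdivision lo hi) = 1 :=
  Nat.card_eq_one_iff_exists.2 ⟨⟨_, .empty_of_le h⟩,
    fun R => Subtype.ext (funext fun k => R.2.eq_empty k (by omega))⟩

theorem card_subdivision (lo hi : ℕ) : Nat.card (Subdivision lo hi) = catalan (hi - lo) := by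
  induction hn : hi - lo using Nat.strong_induction_on generalizing lo hi with
  | _ n ih =>
  have hfin : ∀ lo' hi', hi' - lo' < n → Finite (Subdivision lo' hi') := fun lo' hi' h =>
    Nat.finite_of_card_ne_zero (by rw [ih _ h lo' hi' rfl]; exact catalan_ne_zero _)
  cases n with
  | zero => rw [card_subdivision_of_le (by omega), catalan_zero]
  | succ n =>
    obtain rfl : hi = lo + n + 1 := by omega
    have (i : Fin (n + 1)) :
        Finite (Subdivision lo (lo + i) × Subdivision (lo + i + 1) (lo + n + 1)) :=
      have := hfin lo (lo + i) (by omega)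
      have := hfin (lo + i + 1) (lo + n + 1) (by omega)
      inferInstance
    rw [← Nat.card_congr (glueEquiv lo n), Nat.card_sigma, catalan_succ]
    refine Finset.sum_congr rfl fun i _ => ?_
    rw [Nat.card_prod, ih _ (by omega) _ _ rfl, ih _ (by omega) _ _ rfl]
    congr 2 <;> omega

lemma IsSubdivision.isStaircaseSubdiv {r : ℕ} {R : ℕ → Finset (ℕ × ℕ)}
    (h : IsSubdivision 1 (r + 2) R) : IsStaircaseSubdiv r (fun k => R (k + 1)) := by
  refine ⟨fun k => ?_, fun p => ⟨fun ⟨h₁, h₂, h₃⟩ => ?_, fun ⟨j, hj, _⟩ => ?_⟩⟩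
  · obtain ⟨a, b, ha, hak, hkb, hb, hR⟩ := h.eq_diagRect (k + 1) (by omega) (by omega)
    exact ⟨a, b, ha, hak, hkb, by omega, hR⟩
  · obtain ⟨k, hk⟩ := h.exists_mem p h₁ h₂ (by omega)
    have := h.bounds_of_mem hk
    refine ⟨⟨k - 1, by omega⟩, by simpa [Nat.sub_add_cancel (by omega : 1 ≤ k)] using hk,
      fun j hj => Fin.ext ?_⟩
    have := h.eq_of_mem hj hk
    change (j : ℕ) = k - 1
    omega
  · have := h.bounds_of_mem hj
    omega

lemma IsStaircaseSubdiv.isSubdivision {r : ℕ} {R : ℕ → Finset (ℕ × ℕ)}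
    (h : IsStaircaseSubdiv r (fun k => R (k + 1))) (h0 : ∀ k, k < 1 ∨ r + 2 ≤ k → R k = ∅) :
    IsSubdivision 1 (r + 2) R := by
  obtain ⟨hrect, hpart⟩ := h
  have hrange : ∀ {p k}, p ∈ R k → 1 ≤ k ∧ k < r + 2 := fun {p k} hp => by
    by_contra hk
    rw [h0 k (by omega)] at hp
    simp at hp
  have hrect' : ∀ k, 1 ≤ k → k < r + 2 →
      ∃ a b, 1 ≤ a ∧ a ≤ k ∧ k ≤ b ∧ b < r + 2 ∧ R k = diagRect a k b := fun k h₁ h₂ => by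
    obtain ⟨a, b, ha, hak, hkb, hb, hR⟩ := hrect ⟨k - 1, by omega⟩
    simp only [Nat.sub_add_cancel h₁] at hak hkb hR
    exact ⟨a, b, ha, hak, hkb, by omega, hR⟩
  refine ⟨hrect', h0, fun p h₁ h₂ h₃ => ?_, fun {p k l} hp hq => ?_⟩
  · obtain ⟨j, hj, -⟩ := (hpart p).1 ⟨h₁, h₂, by omega⟩
    exact ⟨j + 1, hj⟩
  · obtain ⟨hk₁, hk₂⟩ := hrange hp
    obtain ⟨hl₁, hl₂⟩ := hrange hq
    obtain ⟨a, b, ha, -, -, hb, hR⟩ := hrect' k hk₁ hk₂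
    obtain ⟨j, -, huniq⟩ := (hpart p).1 (by rw [hR, mem_diagRect] at hp; omega)
    have hk := huniq ⟨k - 1, by omega⟩ (by simpa [Nat.sub_add_cancel hk₁] using hp)
    have hl := huniq ⟨l - 1, by omega⟩ (by simpa [Nat.sub_add_cancel hl₁] using hq)
    have := Fin.mk.inj (hk.trans hl.symm)
    omega

def subdivisionEquivStaircase (r : ℕ) :
    Subdivision 1 (r + 2) ≃ {R : Fin (r + 1) → Finset (ℕ × ℕ) // IsStaircaseSubdiv r R} where
  toFun R := ⟨fun k => R.1 (k + 1), R.2.isStaircaseSubdiv⟩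
  invFun R := ⟨fun k => if h : 1 ≤ k ∧ k < r + 2 then R.1 ⟨k - 1, by omega⟩ else ∅,
    (by simpa [Fin.is_le] using R.2 : IsStaircaseSubdiv r _).isSubdivision
      fun k hk => dif_neg (by omega)⟩
  left_inv R := Subtype.ext <| funext fun k => by
    dsimp only
    split_ifs with hk
    · simp [Nat.sub_add_cancel hk.1]
    · exact (R.2.eq_empty k (by omega)).symm
  right_inv R := Subtype.ext <| funext fun k => by simp [Fin.is_le]

/-- subdivisions of the staircase shape `D_{r+1}` into `r+1`
rectangles, each containing a diagonal box, are in bijection with plane binary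
trees on `r+1` nodes; in particular their number is the Catalan number
`C_{r+1} = binomial(2(r+1), r+1) / (r+2)`. -/
theorem staircase_subdivisions_equiv_trees_card_catalan (r : ℕ) :
    Nonempty ({R : Fin (r + 1) → Finset (ℕ × ℕ) // IsStaircaseSubdiv r R} ≃
        {t : PBTree // t.size = r + 1}) ∧
    Nat.card {R : Fin (r + 1) → Finset (ℕ × ℕ) // IsStaircaseSubdiv r R} =
      catalan (r + 1) ∧
    catalan (r + 1) = (Nat.choose (2 * (r + 1)) (r + 1)) / (r + 2) := by
  have hsub : Nat.card {R : Fin (r + 1) → Finset (ℕ × ℕ) // IsStaircaseSubdiv r R} =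
      catalan (r + 1) := by
    rw [← Nat.card_congr (subdivisionEquivStaircase r), card_subdivision]
    rfl
  have htree := PBTree.card_size_eq (r + 1)
  have := Nat.finite_of_card_ne_zero (hsub ▸ catalan_ne_zero _)
  have := Nat.finite_of_card_ne_zero (htree ▸ catalan_ne_zero _)
  exact ⟨Finite.card_eq.1 (hsub.trans htree.symm), hsub, catalan_eq_centralBinom_div _⟩
end

section
/- Let P be a finite poset of cardinality n and Q = {q_1} a single element of P. Then the set of values σ(q_1) over all linear extensions σ of P is exactly the integer interval [1 + d_-, n - d_+], where d_- is the number of elements strictly below q_1 and d_+ is the number of elements strictly above q_1. -/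
/-!
Monotonicity of `σ` alone gives the bounds: the `d₋` elements below `q₁` must receive smaller
values and the `d₊` elements above it larger ones. Conversely, for `d₋ ≤ k ≤ n - 1 - d₊` grow the
lower set `{x | x < q₁}` inside the lower set `{x | ¬ q₁ ≤ x}`, one minimal element at a time, to a
lower set `S` of size `k`; listing `S` first, then `q₁`, then the rest, each part in a linear
extension, puts `q₁` at position `k + 1`.
-/

open Function

theorem Equiv.ncard_setOf_apply_lt {P : Type*} {n : ℕ} (σ : P ≃ Fin n) (i : Fin n) :
    {y | σ y < i}.ncard = i := by
  change (σ ⁻¹' Set.Iio i).ncard = i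
  rw [Set.ncard_preimage_of_injective_subset_range σ.injective (by simp),
    ← Finset.coe_Iio, Set.ncard_coe_finset, Fin.card_Iio]

theorem Equiv.ncard_setOf_lt_apply {P : Type*} {n : ℕ} (σ : P ≃ Fin n) (i : Fin n) :
    {y | i < σ y}.ncard = n - 1 - i := by
  change (σ ⁻¹' Set.Ioi i).ncard = n - 1 - i
  rw [Set.ncard_preimage_of_injective_subset_range σ.injective (by simp),
    ← Finset.coe_Ioi, Set.ncard_coe_finset, Fin.card_Ioi]

theorem exists_equiv_fin_lt_iff {P β : Type*} [Fintype P] [LinearOrder β] {g : P → β}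
    (hg : Injective g) : ∃ σ : P ≃ Fin (Fintype.card P), ∀ x y, σ x < σ y ↔ g x < g y := by
  let e := Fintype.orderIsoFinOfCardEq (Set.range g) (Set.card_range_of_injective hg)
  exact ⟨(Equiv.ofInjective g hg).trans e.symm.toEquiv, fun _ _ => e.symm.lt_iff_lt⟩

theorem IsLowerSet.exists_ncard_eq_of_subset {P : Type*} [PartialOrder P] [Finite P]
    {A B : Set P} (hA : IsLowerSet A) (hB : IsLowerSet B) (hAB : A ⊆ B) {k : ℕ}
    (hAk : A.ncard ≤ k) (hkB : k ≤ B.ncard) :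
    ∃ S, IsLowerSet S ∧ A ⊆ S ∧ S ⊆ B ∧ S.ncard = k := by
  induction k, hAk using Nat.le_induction with
  | base => exact ⟨A, hA, subset_rfl, hAB, rfl⟩
  | succ k _ ih =>
    obtain ⟨S, hS, hAS, hSB, rfl⟩ := ih (by omega)
    obtain ⟨m, hm⟩ := (Set.toFinite (B \ S)).exists_minimal
      (Set.sdiff_nonempty_of_ncard_lt_ncard (by omega))
    refine ⟨insert m S, ?_, hAS.trans (Set.subset_insert m S), Set.insert_subset hm.1.1 hSB,
      Set.ncard_insert_of_notMem hm.1.2⟩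
    rintro x y hxy (rfl | hy)
    · by_contra hx
      exact hm.not_lt ⟨hB hxy hm.1.1, fun h => hx (.inr h)⟩ (hxy.lt_of_ne fun h => hx (.inl h))
    · exact .inr (hS hxy hy)

theorem exists_linearExtension_refining {P α : Type*} [PartialOrder P] [Fintype P]
    [LinearOrder α] {f : P → α} (hf : Monotone f) :
    ∃ σ : P ≃ Fin (Fintype.card P),
      (∀ x y, x < y → σ x < σ y) ∧ ∀ x y, f x < f y → σ x < σ y := by
  -- sort lexicographically by `f`, breaking ties by an arbitrary linear extension of `P`
  let g : P → α ×ₗ LinearExtension P := fun x => toLex (f x, toLinearExtension x)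
  have hg : Injective g := fun x y h => congrArg (fun p => (ofLex p).2) h
  obtain ⟨σ, hσ⟩ := exists_equiv_fin_lt_iff hg
  refine ⟨σ, fun x y hxy => (hσ x y).2 ?_,
    fun x y hxy => (hσ x y).2 (Prod.Lex.lt_iff.2 (.inl hxy))⟩
  exact Prod.Lex.toLex_strictMono (Prod.mk_lt_mk_of_le_of_lt (hf hxy.le)
    (toLinearExtension.monotone.strictMono_of_injective (fun _ _ h => h) hxy))

theorem exists_linearExtension_apply_eq_ncard {P : Type*} [PartialOrder P] [Fintype P]
    {S : Set P} (hS : IsLowerSet S) {q : P} (hqS : q ∉ S) (hIio : Set.Iio q ⊆ S) :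
    ∃ σ : P ≃ Fin (Fintype.card P), (∀ x y, x < y → σ x < σ y) ∧ (σ q : ℕ) = S.ncard := by
  classical
  let level : P → ℕ := fun x => if x ∈ S then 0 else if x = q then 1 else 2
  have hlevel : Monotone level := by
    intro x y hxy
    by_cases hy : y ∈ S
    · simp [level, hS hxy hy, hy]
    by_cases hyq : y = q
    · subst hyq
      obtain rfl | hlt := hxy.eq_or_lt
      · exact le_rfl
      · simp [level, hIio hlt, hy]
    · simp only [level, hy, hyq, if_false]
      split_ifs <;> omega
  obtain ⟨σ, hσ, hσlevel⟩ := exists_linearExtension_refining hlevel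
  refine ⟨σ, hσ, ?_⟩
  rw [← σ.ncard_setOf_apply_lt]
  congr 1
  ext y
  refine ⟨fun (hy : σ y < σ q) => ?_, fun hy => hσlevel y q (by simp [level, hy, hqS])⟩
  by_contra hyS
  obtain rfl | hyq := eq_or_ne y q
  · exact lt_irrefl _ hy
  · exact (hσlevel q y (by simp [level, hyS, hyq, hqS])).not_gt hy

/-- for a finite poset `P` with `|P| = n` and an element `q₁`,
the set of (1-based) values `σ q₁` over all linear extensions `σ` of `P` is
exactly the integer interval `[1 + d₋, n - d₊]`, where `d₋` is the number of
elements strictly below `q₁` and `d₊` the number strictly above. -/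
theorem single_element_values_interval
    {P : Type*} [PartialOrder P] [Fintype P] (q₁ : P) :
    {m : ℕ | ∃ σ : P ≃ Fin (Fintype.card P),
        (∀ x y : P, x < y → σ x < σ y) ∧ m = (σ q₁ : ℕ) + 1} =
      Set.Icc (1 + {x : P | x < q₁}.ncard)
        (Fintype.card P - {x : P | q₁ < x}.ncard) := by
  ext m
  rw [Set.Iio_def, Set.Ioi_def, Set.mem_Icc]
  constructor
  · rintro ⟨σ, hσ, rfl⟩
    have hbelow : (Set.Iio q₁).ncard ≤ σ q₁ :=
      σ.ncard_setOf_apply_lt (σ q₁) ▸ Set.ncard_le_ncard fun x => hσ x q₁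
    have habove : (Set.Ioi q₁).ncard ≤ Fintype.card P - 1 - σ q₁ :=
      σ.ncard_setOf_lt_apply (σ q₁) ▸ Set.ncard_le_ncard fun x => hσ q₁ x
    have := (σ q₁).isLt
    exact ⟨by omega, by omega⟩
  · rintro ⟨hlo, hhi⟩
    have hnotAbove : (Set.Ici q₁)ᶜ.ncard = Fintype.card P - ((Set.Ioi q₁).ncard + 1) := by
      rw [Set.ncard_compl, Nat.card_eq_fintype_card, ← Set.Ioi_insert,
        Set.ncard_insert_of_notMem Set.self_notMem_Ioi]
    obtain ⟨S, hS, hIio, hSB, hScard⟩ := (isLowerSet_Iio q₁).exists_ncard_eq_of_subset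
      (isUpperSet_Ici q₁).compl (fun x hx => not_le_of_gt hx) (k := m - 1) (by omega) (by omega)
    obtain ⟨σ, hσ, hσq⟩ :=
      exists_linearExtension_apply_eq_ncard hS (fun h => hSB h le_rfl) hIio
    exact ⟨σ, hσ, by omega⟩
end

section
/- Let P be a finite poset, Q = {q_1 < ... < q_r} a chain in P, and suppose (c_1,...,c_r) and (c'_1,...,c'_r) are both (P,Q)-subposet vectors (i.e., arise as (σ(q_1),...,σ(q_r)) for linear extensions σ). Then every integer vector on the segment between them obtained by the convexity of N'_{P,Q} is again a (P,Q)-subposet vector; in particular, for r = 1, if c and c' are achievable values of σ(q_1) with c < c', then every integer c'' with c ≤ c'' ≤ c' is achievable. -/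
/-- `v` is a `(P,Q)`-subposet vector (with 1-based values) for the chain `q`. -/
def IsSubposetVector {P : Type*} [PartialOrder P] [Fintype P]
    {r : ℕ} (q : Fin r → P) (v : Fin r → ℤ) : Prop :=
  ∃ σ : P ≃ Fin (Fintype.card P),
    (∀ x y : P, x < y → σ x < σ y) ∧ ∀ i : Fin r, v i = (σ (q i) : ℕ) + 1

/-!
Subposet vectors are exactly the integer vectors with `#{x ≤ q i} ≤ v i`,
`v i + #{x > q i} ≤ #P` and `#{q i < x ≤ q j} + v i ≤ v j` for `i < j`; these inequalities cut
out a convex set. Necessity is counting under a linear extension. Sufficiency fills the last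
position first: if some `v k` equals `#s`, then `q k` is maximal and goes last; otherwise a
maximal element outside the chain, above every chain element whose second inequality is tight,
goes last. Such an element exists, for otherwise the largest chain element would dominate
everything above the tight ones, and the third inequality would force its value up to `#s`.
Either way the inequalities survive on the remaining set.
-/

open Finset Function

open scoped Classical

section

variable {P : Type*} [PartialOrder P]

def IsLinearExtensionOn (s : Finset P) (f : P → ℕ) : Prop :=
  (∀ x ∈ s, f x < #s) ∧ Set.InjOn f s ∧ ∀ x ∈ s, ∀ y ∈ s, x < y → f x < f y

theorem IsLinearExtensionOn.update_of_maximal {s : Finset P} {f : P → ℕ} {m : P}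
    (hf : IsLinearExtensionOn (s.erase m) f) (hm : Maximal (· ∈ s) m) :
    IsLinearExtensionOn s (update f m (#s - 1)) := by
  obtain ⟨hlt, hinj, hmono⟩ := hf
  have hcard : #(s.erase m) = #s - 1 := card_erase_of_mem hm.1
  have hpos : 0 < #s := card_pos.2 ⟨m, hm.1⟩
  have below : ∀ x ∈ s, x ≠ m → update f m (#s - 1) x < #s - 1 := fun x hx hxm => by
    rw [update_of_ne hxm, ← hcard]
    exact hlt x (mem_erase.2 ⟨hxm, hx⟩)
  refine ⟨fun x hx => ?_, fun x hx y hy hxy => ?_, fun x hx y hy hxy => ?_⟩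
  · rcases eq_or_ne x m with rfl | hxm
    · simp only [update_self]; omega
    · have := below x hx hxm; omega
  · by_cases hxm : x = m <;> by_cases hym : y = m
    · exact hxm.trans hym.symm
    · subst hxm; have := below y hy hym; simp only [update_self] at hxy; omega
    · subst hym; have := below x hx hxm; simp only [update_self] at hxy; omega
    · rw [update_of_ne hxm, update_of_ne hym] at hxy
      exact hinj (mem_erase.2 ⟨hxm, hx⟩) (mem_erase.2 ⟨hym, hy⟩) hxy
  · have hxm : x ≠ m := fun h => hm.not_gt hy (h ▸ hxy)
    rcases eq_or_ne y m with rfl | hym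
    · simpa only [update_self] using below x hx hxm
    · rw [update_of_ne hxm, update_of_ne hym]
      exact hmono x (mem_erase.2 ⟨hxm, hx⟩) y (mem_erase.2 ⟨hym, hy⟩) hxy

theorem exists_equiv_of_isLinearExtensionOn_univ [Fintype P] {f : P → ℕ}
    (hf : IsLinearExtensionOn univ f) :
    ∃ σ : P ≃ Fin (Fintype.card P),
      (∀ x y : P, x < y → σ x < σ y) ∧ ∀ x, (σ x : ℕ) = f x := by
  obtain ⟨hlt, hinj, hmono⟩ := hf
  let g : P → Fin (Fintype.card P) := fun x => ⟨f x, hlt x (mem_univ x)⟩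
  have hg : Bijective g := (Fintype.bijective_iff_injective_and_card g).2
    ⟨fun x y h => hinj (mem_coe.2 (mem_univ x)) (mem_coe.2 (mem_univ y)) (Fin.val_eq_of_eq h),
      Fintype.card_fin _ |>.symm⟩
  exact ⟨Equiv.ofBijective g hg, fun x y h => hmono x (mem_univ x) y (mem_univ y) h,
    fun _ => rfl⟩

variable {r : ℕ} (q : Fin r → P)

/-- Chain elements outside `s` are left unconstrained, so that the bounds restrict to `s.erase m`
when the maximal element `m` is removed. -/
def ChainBounds {R : Type*} [AddMonoidWithOne R] [LE R] (s : Finset P) (v : Fin r → R) :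
    Prop :=
  ∀ i, q i ∈ s →
    (#{x ∈ s | x ≤ q i} : R) ≤ v i ∧ v i + #{x ∈ s | q i < x} ≤ #s ∧
      ∀ j, i < j → q j ∈ s → (#{x ∈ s | q i < x ∧ x ≤ q j} : R) + v i ≤ v j

theorem chainBounds_of_linearExtension [Fintype P] (hq : Monotone q)
    (σ : P ≃ Fin (Fintype.card P)) (hσ : ∀ x y : P, x < y → σ x < σ y) :
    ChainBounds q univ fun i => ((σ (q i) : ℕ) : ℤ) + 1 := by
  have hσ' : StrictMono σ := fun x y h => hσ x y h
  have card_le {A : Finset P} {B : Finset (Fin (Fintype.card P))} (h : ∀ x ∈ A, σ x ∈ B) :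
      #A ≤ #B :=
    card_le_card_of_injOn σ h σ.injective.injOn
  intro i _
  have hL : #{x | x ≤ q i} ≤ #(Iic (σ (q i))) :=
    card_le fun x hx => mem_Iic.2 (hσ'.monotone (mem_filter.1 hx).2)
  have hU : #{x | q i < x} ≤ #(Ioi (σ (q i))) :=
    card_le fun x hx => mem_Ioi.2 (hσ' (mem_filter.1 hx).2)
  rw [Fin.card_Iic] at hL
  rw [Fin.card_Ioi] at hU
  have := (σ (q i)).isLt
  refine ⟨by push_cast; omega, by simp only [card_univ]; omega, fun j hij _ => ?_⟩
  have hI : #{x | q i < x ∧ x ≤ q j} ≤ #(Ioc (σ (q i)) (σ (q j))) :=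
    card_le fun x hx => mem_Ioc.2
      ⟨hσ' (mem_filter.1 hx).2.1, hσ'.monotone (mem_filter.1 hx).2.2⟩
  rw [Fin.card_Ioc] at hI
  have := hσ'.monotone (hq hij.le)
  push_cast
  omega

theorem ChainBounds.erase {s : Finset P} {v : Fin r → ℤ} (h : ChainBounds q s v) {m : P}
    (hm : m ∈ s)
    (hslack : ∀ i, q i ∈ s.erase m → ¬ q i < m → v i + #{x ∈ s | q i < x} < #s) :
    ChainBounds q (s.erase m) v := by
  intro i hi
  obtain ⟨hL, hU, hI⟩ := h i (mem_of_mem_erase hi)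
  have hcard : #(s.erase m) = #s - 1 := card_erase_of_mem hm
  have hpos : 0 < #s := card_pos.2 ⟨m, hm⟩
  have shrink {p : P → Prop} [DecidablePred p] : #{x ∈ s.erase m | p x} ≤ #{x ∈ s | p x} :=
    card_le_card (filter_subset_filter _ (erase_subset m s))
  refine ⟨le_trans (by exact_mod_cast shrink) hL, ?_, fun j hij hj =>
    le_trans (add_le_add_left (by exact_mod_cast shrink) _) (hI j hij (mem_of_mem_erase hj))⟩
  by_cases hlt : q i < m
  · have : #{x ∈ s.erase m | q i < x} = #{x ∈ s | q i < x} - 1 := by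
      rw [filter_erase, card_erase_of_mem (mem_filter.2 ⟨hm, hlt⟩)]
    have : 0 < #{x ∈ s | q i < x} := card_pos.2 ⟨m, mem_filter.2 ⟨hm, hlt⟩⟩
    omega
  · have := hslack i hi hlt
    have : #{x ∈ s.erase m | q i < x} ≤ #{x ∈ s | q i < x} := shrink
    omega

theorem exists_maximal_notMem_range_of_unbounded (hq : Monotone q) {C : Finset P}
    (hC : C.Nonempty) (hbound : ∀ j, q j ∈ C → ¬ ∀ x ∈ C, x ≤ q j) :
    ∃ m, Maximal (· ∈ C) m ∧ m ∉ Set.range q := by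
  by_contra! h
  obtain ⟨x₀, hx₀⟩ := hC
  obtain ⟨_, -, hb⟩ := C.exists_le_maximal hx₀
  obtain ⟨j, rfl⟩ := h _ hb
  refine hbound j hb.1 fun x hx => ?_
  obtain ⟨_, hxm, hm⟩ := C.exists_le_maximal hx
  obtain ⟨k, rfl⟩ := h _ hm
  rcases le_total k j with hkj | hjk
  · exact hxm.trans (hq hkj)
  · exact hxm.trans (hb.2 hm.1 (hq hjk))

theorem ChainBounds.top_of_eq_card (hq : StrictMono q) {s : Finset P} {v : Fin r → ℤ}
    (h : ChainBounds q s v) {k : Fin r} (hk : q k ∈ s) (hvk : v k = #s) :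
    Maximal (· ∈ s) (q k) ∧ ∀ i, q i ∈ s → q i ≠ q k → q i < q k := by
  have hU := (h k hk).2.1
  refine ⟨maximal_iff_forall_gt.2 ⟨hk, fun x hlt hx => ?_⟩, fun i hi hik => ?_⟩
  · have : 0 < #{x ∈ s | q k < x} := card_pos.2 ⟨x, mem_filter.2 ⟨hx, hlt⟩⟩
    omega
  · rcases lt_trichotomy i k with hlt | rfl | hgt
    · exact hq hlt
    · exact absurd rfl hik
    · have hI := (h k hk).2.2 i hgt hi
      have : 0 < #{x ∈ s | q k < x ∧ x ≤ q i} :=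
        card_pos.2 ⟨q i, mem_filter.2 ⟨hi, hq hgt, le_rfl⟩⟩
      have := (h i hi).2.1
      omega

theorem ChainBounds.exists_maximal_gt_of_tight (hq : StrictMono q) {s : Finset P}
    {v : Fin r → ℤ} (h : ChainBounds q s v) (hne : ∀ k, q k ∈ s → v k ≠ #s)
    {i₀ : Fin r} (hi₀ : q i₀ ∈ s) (ht₀ : v i₀ + #{x ∈ s | q i₀ < x} = #s) :
    ∃ m, Maximal (· ∈ s) m ∧ m ∉ Set.range q ∧ q i₀ < m := by
  have := hne i₀ hi₀
  obtain ⟨m, hm, hmq⟩ := exists_maximal_notMem_range_of_unbounded q hq.monotone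
    (C := {x ∈ s | q i₀ < x}) (card_pos.1 (by omega)) fun j hj hle => by
      obtain ⟨hjs, hlt⟩ := mem_filter.1 hj
      have hsub : {x ∈ s | q i₀ < x} ⊆ {x ∈ s | q i₀ < x ∧ x ≤ q j} := fun x hx => by
        obtain ⟨hxs, hxlt⟩ := mem_filter.1 hx
        exact mem_filter.2 ⟨hxs, hxlt, hle x hx⟩
      have := card_le_card hsub
      have := (h i₀ hi₀).2.2 j (hq.lt_iff_lt.1 hlt) hjs
      have := (h j hjs).2.1
      have := hne j hjs
      omega
  obtain ⟨hms, hmlt⟩ := mem_filter.1 hm.1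
  exact ⟨m, maximal_iff_forall_gt.2 ⟨hms, fun x hmx hx =>
    hm.not_gt (mem_filter.2 ⟨hx, hmlt.trans hmx⟩) hmx⟩, hmq, hmlt⟩

theorem ChainBounds.exists_maximal_of_not_tight (hq : Monotone q) {s : Finset P}
    {v : Fin r → ℤ} (h : ChainBounds q s v) (hs : s.Nonempty)
    (hne : ∀ k, q k ∈ s → v k ≠ #s) :
    ∃ m, Maximal (· ∈ s) m ∧ m ∉ Set.range q := by
  refine exists_maximal_notMem_range_of_unbounded q hq hs fun j hj hle => ?_
  have hL := (h j hj).1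
  rw [filter_true_of_mem hle] at hL
  have := (h j hj).2.1
  have := hne j hj
  omega

theorem ChainBounds.exists_maximal_above_tight (hq : StrictMono q) {s : Finset P}
    {v : Fin r → ℤ} (h : ChainBounds q s v) (hs : s.Nonempty)
    (hne : ∀ k, q k ∈ s → v k ≠ #s) :
    ∃ m, Maximal (· ∈ s) m ∧ m ∉ Set.range q ∧
      ∀ i, q i ∈ s → v i + #{x ∈ s | q i < x} = #s → q i < m := by
  by_cases hT : ∃ i, q i ∈ s ∧ v i + #{x ∈ s | q i < x} = #s
  · obtain ⟨i₀, hi₀, hmax⟩ :=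
      ({i | q i ∈ s ∧ v i + #{x ∈ s | q i < x} = #s} : Finset (Fin r)).exists_max_image id
        (hT.imp fun i hi => mem_filter.2 ⟨mem_univ i, hi⟩)
    obtain ⟨hi₀s, ht₀⟩ := (mem_filter.1 hi₀).2
    obtain ⟨m, hm, hmq, hlt⟩ := h.exists_maximal_gt_of_tight q hq hne hi₀s ht₀
    exact ⟨m, hm, hmq, fun i hi ht =>
      (hq.monotone (hmax i (mem_filter.2 ⟨mem_univ i, hi, ht⟩))).trans_lt hlt⟩
  · simp only [not_exists, not_and] at hT
    obtain ⟨m, hm, hmq⟩ := h.exists_maximal_of_not_tight q hq.monotone hs hne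
    exact ⟨m, hm, hmq, fun i hi ht => absurd ht (hT i hi)⟩

theorem ChainBounds.exists_maximal_erase (hq : StrictMono q) {s : Finset P} {v : Fin r → ℤ}
    (h : ChainBounds q s v) (hs : s.Nonempty) :
    ∃ m, Maximal (· ∈ s) m ∧ (∀ i, q i = m → v i = #s) ∧
      ChainBounds q (s.erase m) v := by
  by_cases htight : ∃ k, q k ∈ s ∧ v k = #s
  · obtain ⟨k, hk, hvk⟩ := htight
    obtain ⟨hmax, hlt⟩ := h.top_of_eq_card q hq hk hvk
    exact ⟨q k, hmax, fun i hi => hq.injective hi ▸ hvk, h.erase q hk fun i hi hnlt =>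
      absurd (hlt i (mem_of_mem_erase hi) (ne_of_mem_erase hi)) hnlt⟩
  · simp only [not_exists, not_and] at htight
    obtain ⟨m, hm, hmq, habove⟩ := h.exists_maximal_above_tight q hq hs htight
    refine ⟨m, hm, fun i hi => absurd ⟨i, hi⟩ hmq, h.erase q hm.1 fun i hi hnlt => ?_⟩
    have hi := mem_of_mem_erase hi
    exact lt_of_le_of_ne (h i hi).2.1 fun ht => hnlt (habove i hi ht)

theorem ChainBounds.exists_isLinearExtensionOn (hq : StrictMono q) {v : Fin r → ℤ}
    (s : Finset P) (h : ChainBounds q s v) :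
    ∃ f, IsLinearExtensionOn s f ∧ ∀ i, q i ∈ s → v i = f (q i) + 1 := by
  induction s using Finset.strongInduction with
  | H s ih =>
  rcases s.eq_empty_or_nonempty with rfl | hs
  · exact ⟨0, ⟨by simp, by simp, by simp⟩, by simp⟩
  obtain ⟨m, hm, htop, herase⟩ := h.exists_maximal_erase q hq hs
  obtain ⟨f, hf, hfv⟩ := ih _ (erase_ssubset hm.1) herase
  refine ⟨update f m (#s - 1), hf.update_of_maximal hm, fun i hi => ?_⟩
  by_cases him : q i = m
  · have := card_pos.2 hs
    rw [him, update_self, htop i him]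
    omega
  · rw [update_of_ne him]
    exact hfv i (mem_erase.2 ⟨him, hi⟩)

theorem isSubposetVector_iff_chainBounds [Fintype P] (hq : StrictMono q) (v : Fin r → ℤ) :
    IsSubposetVector q v ↔ ChainBounds q univ v := by
  constructor
  · rintro ⟨σ, hσ, hv⟩
    rw [funext hv]
    exact chainBounds_of_linearExtension q hq.monotone σ hσ
  · intro h
    obtain ⟨f, hf, hfv⟩ := h.exists_isLinearExtensionOn q hq univ
    obtain ⟨σ, hσ, hσf⟩ := exists_equiv_of_isLinearExtensionOn_univ hf
    exact ⟨σ, hσ, fun i => by rw [hfv i (mem_univ _), hσf]⟩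

theorem chainBounds_intCast_iff (s : Finset P) (v : Fin r → ℤ) :
    ChainBounds q s (fun i => (v i : ℝ)) ↔ ChainBounds q s v := by
  simp only [ChainBounds]
  norm_cast

theorem convex_chainBounds (s : Finset P) : Convex ℝ {u : Fin r → ℝ | ChainBounds q s u} := by
  intro u hu u' hu' a b ha hb hab i hi
  obtain ⟨hL, hU, hI⟩ := hu i hi
  obtain ⟨hL', hU', hI'⟩ := hu' i hi
  simp only [Pi.add_apply, Pi.smul_apply, smul_eq_mul]
  refine ⟨by nlinarith, by nlinarith, fun j hij hj => ?_⟩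
  nlinarith [hI j hij hj, hI' j hij hj]

end

/-- if `v` and `v'` are `(P,Q)`-subposet vectors for a chain
`Q = {q 1 < ... < q r}` in a finite poset `P`, then every integer vector lying
on the segment between them is again a `(P,Q)`-subposet vector; in particular,
for a single element `q₁` (`r = 1`), every integer between two achievable
values of `σ q₁` is achievable. -/
theorem subposet_vectors_integrally_convex
    {P : Type*} [PartialOrder P] [Fintype P]
    (r : ℕ) (q : Fin r → P) (hq : StrictMono q) :
    (∀ v v' w : Fin r → ℤ,
      IsSubposetVector q v → IsSubposetVector q v' →
      (fun i => (w i : ℝ)) ∈ segment ℝ (fun i => (v i : ℝ)) (fun i => (v' i : ℝ)) →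
      IsSubposetVector q w) ∧
    (∀ q₁ : P, ∀ c c' c'' : ℤ,
      IsSubposetVector (fun _ : Fin 1 => q₁) (fun _ => c) →
      IsSubposetVector (fun _ : Fin 1 => q₁) (fun _ => c') →
      c ≤ c'' → c'' ≤ c' →
      IsSubposetVector (fun _ : Fin 1 => q₁) (fun _ => c'')) := by
  refine ⟨fun v v' w hv hv' hw => ?_, fun q₁ c c' c'' hc hc' hle hle' => ?_⟩
  · simp only [isSubposetVector_iff_chainBounds q hq, ← chainBounds_intCast_iff q] at hv hv' ⊢
    exact (convex_chainBounds q univ).segment_subset hv hv' hw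
  · have hq₁ : StrictMono fun _ : Fin 1 => q₁ := Subsingleton.strictMono _
    rw [isSubposetVector_iff_chainBounds _ hq₁] at hc hc' ⊢
    intro i hi
    exact ⟨(hc i hi).1.trans hle, by linarith [(hc' i hi).2.1],
      fun j hij => absurd hij (Subsingleton.elim i j).not_lt⟩
end
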